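/- arXiv:2212.12045 — 8 statements merged into one kernel-verified Lean document; each statement's English description precedes it below -/
import Mathlib

section
/- Let I be a proper sampling of {1,…,d} with marginals π_i ∈ (0,1), E the associated random activation matrix and P = blkdiag(π_1^{−1}I_{m_1},…,π_d^{−1}I_{m_d}), so 𝔼[PE] = I_m. Fix x̂, x, w ∈ ℝ^m and set x⁺ = x + E(x̂ − x). Then (1/2)‖A(x̂ − w)‖² = (1/2)𝔼[‖A(x + P(x⁺ − x) − w)‖²] − (1/2)𝔼[‖A(PE − I)(x̂ − x)‖²]. -/
open Matrix Finset

/-- Variance decomposition (Lemma A.2 / eq. (Ex1) of the paper).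
`β : Fin m → Fin d` assigns each coordinate to its block; the activation matrix
of a realised sample `s` is `E s = blkdiag(1_{i∈s} I_{m_i})` and
`P = blkdiag(π_i⁻¹ I_{m_i})`.  A proper sampling is described by a probability
mass function `p` on subsets of `{1,…,d}` with marginals `π_i ∈ (0,1)`.
With `x⁺ = x + E(x̂ − x)` one has
`(1/2)‖A(x̂ − w)‖² = (1/2)𝔼‖A(x + P(x⁺ − x) − w)‖² − (1/2)𝔼‖A(PE − I)(x̂ − x)‖²`. -/
theorem stmt_4 (q m d : ℕ) (A : Matrix (Fin q) (Fin m) ℝ)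
    (β : Fin m → Fin d)
    (p : Finset (Fin d) → ℝ) (hp0 : ∀ s, 0 ≤ p s)
    (hp1 : ∑ s : Finset (Fin d), p s = 1)
    (π : Fin d → ℝ) (hπ : ∀ i, 0 < π i ∧ π i < 1)
    (hmarg : ∀ i, (∑ s : Finset (Fin d), if i ∈ s then p s else 0) = π i)
    (P : Matrix (Fin m) (Fin m) ℝ)
    (hP : P = Matrix.diagonal fun j => (π (β j))⁻¹)
    (E : Finset (Fin d) → Matrix (Fin m) (Fin m) ℝ)
    (hE : ∀ s, E s = Matrix.diagonal fun j => if β j ∈ s then (1 : ℝ) else 0)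
    (xhat x w : Fin m → ℝ)
    (xplus : Finset (Fin d) → Fin m → ℝ)
    (hxplus : ∀ s, xplus s = x + (E s).mulVec (xhat - x)) :
    (1 / 2) * (A.mulVec (xhat - w) ⬝ᵥ A.mulVec (xhat - w))
      = (1 / 2) * (∑ s : Finset (Fin d), p s *
            (A.mulVec (x + P.mulVec (xplus s - x) - w)
              ⬝ᵥ A.mulVec (x + P.mulVec (xplus s - x) - w)))
        - (1 / 2) * (∑ s : Finset (Fin d), p s *
            (A.mulVec ((P * E s - 1).mulVec (xhat - x))
              ⬝ᵥ A.mulVec ((P * E s - 1).mulVec (xhat - x)))) := by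
  set y : Fin m → ℝ := xhat - x with hy
  set a : Fin q → ℝ := A.mulVec (xhat - w) with ha
  set b : Finset (Fin d) → Fin q → ℝ :=
    fun s => A.mulVec ((P * E s - 1).mulVec y) with hb
  -- pointwise value of (P * E s - 1).mulVec y
  have hval : ∀ s (j : Fin m),
      ((P * E s - 1).mulVec y) j
        = ((π (β j))⁻¹ * (if β j ∈ s then (1:ℝ) else 0) - 1) * y j := by
    intro s j
    rw [hP, hE, Matrix.diagonal_mul_diagonal, ← Matrix.diagonal_one,
      Matrix.diagonal_sub, Matrix.mulVec_diagonal]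
  -- the expectation of the scalar coefficient vanishes
  have hzero : ∀ j : Fin m,
      (∑ s : Finset (Fin d), p s * ((P * E s - 1).mulVec y) j) = 0 := by
    intro j
    have hπj : π (β j) ≠ 0 := (hπ (β j)).1.ne'
    calc (∑ s : Finset (Fin d), p s * ((P * E s - 1).mulVec y) j)
        = ∑ s : Finset (Fin d),
            ((π (β j))⁻¹ * (if β j ∈ s then p s else 0) - p s) * y j := by
          refine Finset.sum_congr rfl fun s _ => ?_
          rw [hval]
          by_cases h : β j ∈ s <;> simp [h] <;> ring
      _ = ((π (β j))⁻¹ * (∑ s : Finset (Fin d), if β j ∈ s then p s else 0)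
            - ∑ s : Finset (Fin d), p s) * y j := by
          rw [← Finset.sum_mul, Finset.sum_sub_distrib, ← Finset.mul_sum]
      _ = 0 := by rw [hmarg, hp1, inv_mul_cancel₀ hπj]; ring
  -- cross term vanishes
  have hcross : (∑ s : Finset (Fin d), p s * (a ⬝ᵥ b s)) = 0 := by
    calc (∑ s : Finset (Fin d), p s * (a ⬝ᵥ b s))
        = ∑ s : Finset (Fin d), ∑ k : Fin q, ∑ j : Fin m,
            a k * A k j * (p s * ((P * E s - 1).mulVec y) j) := by
          refine Finset.sum_congr rfl fun s _ => ?_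
          rw [dotProduct, Finset.mul_sum]
          refine Finset.sum_congr rfl fun k _ => ?_
          have : b s k = ∑ j : Fin m, A k j * ((P * E s - 1).mulVec y) j := rfl
          rw [this, Finset.mul_sum, Finset.mul_sum]
          exact Finset.sum_congr rfl fun j _ => by ring
      _ = ∑ k : Fin q, ∑ j : Fin m, a k * A k j *
            ∑ s : Finset (Fin d), p s * ((P * E s - 1).mulVec y) j := by
          rw [Finset.sum_comm]
          refine Finset.sum_congr rfl fun k _ => ?_
          rw [Finset.sum_comm]
          refine Finset.sum_congr rfl fun j _ => ?_
          rw [Finset.mul_sum]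
      _ = 0 := by simp [hzero]
  -- rewrite each first-sum term
  have key : ∀ s : Finset (Fin d),
      A.mulVec (x + P.mulVec (xplus s - x) - w) = a + b s := by
    intro s
    have h1 : x + P.mulVec (xplus s - x) - w
        = (xhat - w) + (P * E s - 1).mulVec y := by
      rw [hxplus, add_sub_cancel_left, Matrix.sub_mulVec, Matrix.one_mulVec,
        Matrix.mulVec_mulVec, hy]
      abel
    rw [h1, Matrix.mulVec_add]
  have expand : ∀ s : Finset (Fin d),
      (A.mulVec (x + P.mulVec (xplus s - x) - w)
        ⬝ᵥ A.mulVec (x + P.mulVec (xplus s - x) - w))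
      = a ⬝ᵥ a + 2 * (a ⬝ᵥ b s) + b s ⬝ᵥ b s := by
    intro s
    rw [key s, add_dotProduct, dotProduct_add, dotProduct_add,
      dotProduct_comm (b s) a]
    ring
  have hsum1 : (∑ s : Finset (Fin d), p s *
      (A.mulVec (x + P.mulVec (xplus s - x) - w)
        ⬝ᵥ A.mulVec (x + P.mulVec (xplus s - x) - w)))
      = a ⬝ᵥ a + ∑ s : Finset (Fin d), p s * (b s ⬝ᵥ b s) := by
    calc (∑ s : Finset (Fin d), p s *
        (A.mulVec (x + P.mulVec (xplus s - x) - w)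
          ⬝ᵥ A.mulVec (x + P.mulVec (xplus s - x) - w)))
        = ∑ s : Finset (Fin d),
            (p s * (a ⬝ᵥ a) + 2 * (p s * (a ⬝ᵥ b s)) + p s * (b s ⬝ᵥ b s)) := by
          refine Finset.sum_congr rfl fun s _ => ?_
          rw [expand s]; ring
      _ = (∑ s : Finset (Fin d), p s) * (a ⬝ᵥ a)
            + 2 * (∑ s : Finset (Fin d), p s * (a ⬝ᵥ b s))
            + ∑ s : Finset (Fin d), p s * (b s ⬝ᵥ b s) := by
          rw [Finset.sum_add_distrib, Finset.sum_add_distrib, ← Finset.sum_mul,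
            ← Finset.mul_sum]
      _ = a ⬝ᵥ a + ∑ s : Finset (Fin d), p s * (b s ⬝ᵥ b s) := by
          rw [hp1, hcross]; ring
  rw [hsum1]
  have : ∀ s : Finset (Fin d),
      A.mulVec ((P * E s - 1).mulVec y) = b s := fun s => rfl
  simp only [this]
  ring
end

section
/- Let π_i ∈ (0,1) for i = 1,…,d and let (θ_k)_{k≥0} ⊂ (0,1]. Suppose sequences (x^k), (w^k), (z^k) in ℝ^m satisfy w^0 = x^0, z^k = (1−θ_k)w^k + θ_k x^k, and w^{k+1}_i = z^k_i + (θ_k/π_i)(x^{k+1}_i − x^k_i) for every block i. Define coefficients by γ_i^{0,0} = 1, γ_i^{1,0} = 1 − θ_0/π_i, γ_i^{1,1} = θ_0/π_i, and for k ≥ 1: γ_i^{k+1,t} = (1−θ_k)γ_i^{k,t} for t = 0,…,k−1; γ_i^{k+1,k} = (1−θ_k)γ_i^{k,k} + θ_k(1 − π_i^{−1}); γ_i^{k+1,k+1} = θ_k/π_i. Then: (a) for all k ≥ 1 and all i, w^k_i = Σ_{t=0}^k γ_i^{k,t} x^t_i; (b) for all k ≥ 0, γ_i^{k+1,k} + γ_i^{k+1,k+1}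 = θ_k + (1−θ_k)γ_i^{k,k}; (c) if θ_0 ∈ (0, min_i π_i] and (θ_k) is decreasing, then for all k and i the coefficients γ_i^{k,t} (t = 0,…,k) are all nonnegative and satisfy Σ_{t=0}^k γ_i^{k,t} = 1. -/
open Finset

/-- (Lemma 3 of the paper.)  The averaged iterate `w^k` is a
`γ`-weighted combination of past iterates.  `ℝ^m = ℝ^{m_1} × ⋯ × ℝ^{m_d}` is
modelled as the dependent product `∀ i, Fin (n i) → ℝ`; `x^k, w^k, z^k` satisfy
`w^0 = x^0`, `z^k = (1−θ_k)w^k + θ_k x^k` and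
`w^{k+1}_i = z^k_i + (θ_k/π_i)(x^{k+1}_i − x^k_i)`, and the coefficients
`γ_i^{k,t}` satisfy the stated recursion.  Then:
(a) `w^k_i = Σ_{t=0}^k γ_i^{k,t} x^t_i` for `k ≥ 1`;
(b) `γ_i^{k+1,k} + γ_i^{k+1,k+1} = θ_k + (1−θ_k)γ_i^{k,k}`;
(c) if `θ_0 ∈ (0, min_i π_i]` and `(θ_k)` is decreasing, the `γ_i^{k,t}` are
nonnegative and sum to `1`. -/
theorem stmt_7 (d : ℕ) (n : Fin d → ℕ)
    (π : Fin d → ℝ) (hπ : ∀ i, 0 < π i ∧ π i < 1)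
    (θ : ℕ → ℝ) (hθ : ∀ k, 0 < θ k ∧ θ k ≤ 1)
    (x w z : ℕ → ∀ i, Fin (n i) → ℝ)
    (hw0 : w 0 = x 0)
    (hz : ∀ k i, z k i = (1 - θ k) • w k i + θ k • x k i)
    (hwrec : ∀ k i, w (k + 1) i = z k i + (θ k / π i) • (x (k + 1) i - x k i))
    (γ : Fin d → ℕ → ℕ → ℝ)
    (hγ00 : ∀ i, γ i 0 0 = 1)
    (hγ10 : ∀ i, γ i 1 0 = 1 - θ 0 / π i)
    (hγ11 : ∀ i, γ i 1 1 = θ 0 / π i)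
    (hγrec : ∀ i k, 1 ≤ k →
        (∀ t, t < k → γ i (k + 1) t = (1 - θ k) * γ i k t)
        ∧ γ i (k + 1) k = (1 - θ k) * γ i k k + θ k * (1 - (π i)⁻¹)
        ∧ γ i (k + 1) (k + 1) = θ k / π i) :
    (∀ k, 1 ≤ k → ∀ i, w k i = ∑ t ∈ Finset.range (k + 1), γ i k t • x t i)
    ∧ (∀ k i, γ i (k + 1) k + γ i (k + 1) (k + 1) = θ k + (1 - θ k) * γ i k k)
    ∧ ((0 < θ 0 ∧ ∀ i, θ 0 ≤ π i) → (∀ k l, k ≤ l → θ l ≤ θ k) →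
        ∀ k i, (∀ t, t ≤ k → 0 ≤ γ i k t)
          ∧ (∑ t ∈ Finset.range (k + 1), γ i k t) = 1) := by
  have hkk : ∀ i k, γ i (k + 1) (k + 1) = θ k / π i := by
    intro i k
    cases k with
    | zero => exact hγ11 i
    | succ m => exact (hγrec i (m + 1) (Nat.le_add_left 1 m)).2.2
  refine ⟨?_, ?_, ?_⟩
  · -- part (a)
    intro k hk i
    induction k with
    | zero => omega
    | succ m ih =>
      rcases Nat.eq_zero_or_pos m with h0 | hm
      · subst h0
        funext j
        have := congrFun (hwrec 0 i) j
        simp only [hz, hw0, Pi.add_apply, Pi.smul_apply, Pi.sub_apply, smul_eq_mul] at this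
        simp only [this, Finset.sum_range_succ, Finset.sum_range_zero, hγ10, hγ11,
          Pi.smul_apply, Pi.add_apply, Finset.sum_apply, smul_eq_mul, zero_add]
        ring
      · have ih' := ih hm
        obtain ⟨h1, h2, h3⟩ := hγrec i m hm
        funext j
        have hw := congrFun (hwrec m i) j
        simp only [hz, Pi.add_apply, Pi.smul_apply, Pi.sub_apply, smul_eq_mul, ih',
          Finset.sum_apply] at hw
        simp only [hw, Finset.sum_apply, Pi.smul_apply, smul_eq_mul]
        rw [Finset.sum_range_succ, Finset.sum_range_succ, Finset.sum_range_succ (n := m),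
          h2, h3]
        have hsum : ∑ t ∈ Finset.range m, γ i (m + 1) t * x t i j
            = (1 - θ m) * ∑ t ∈ Finset.range m, γ i m t * x t i j := by
          rw [Finset.mul_sum]
          exact Finset.sum_congr rfl fun t ht => by
            rw [h1 t (Finset.mem_range.mp ht)]; ring
        rw [hsum]
        ring
  · -- part (b)
    intro k i
    cases k with
    | zero => rw [hγ10, hγ11, hγ00]; ring
    | succ m =>
      obtain ⟨h1, h2, h3⟩ := hγrec i (m + 1) (Nat.le_add_left 1 m)
      rw [h2, h3]; ring
  · -- part (c)
    rintro ⟨hθ0, hθπ⟩ hdec k i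
    obtain ⟨hpi0, hpi1⟩ := hπ i
    induction k with
    | zero =>
      refine ⟨fun t ht => ?_, ?_⟩
      · interval_cases t
        rw [hγ00]; norm_num
      · simp [hγ00]
    | succ m ih =>
      obtain ⟨ihn, ihs⟩ := ih
      have hθm1 : θ (m + 1) ≤ π i := le_trans (hdec 0 (m + 1) (Nat.zero_le _)) (hθπ i)
      have hθmp : 0 < θ (m + 1) := (hθ (m + 1)).1
      have hθmle : θ (m + 1) ≤ 1 := (hθ (m + 1)).2
      rcases Nat.eq_zero_or_pos m with h0 | hm
      · subst h0
        constructor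
        · intro t ht
          interval_cases t
          · rw [hγ10]
            have : θ 0 / π i ≤ 1 := div_le_one_of_le₀ (hθπ i) hpi0.le
            linarith
          · rw [hγ11]
            positivity
        · rw [Finset.sum_range_succ, Finset.sum_range_succ, Finset.sum_range_zero,
            hγ10, hγ11]
          ring
      · obtain ⟨h1, h2, h3⟩ := hγrec i m hm
        have hdiag : γ i m m = θ (m - 1) / π i := by
          obtain ⟨p, rfl⟩ := Nat.exists_eq_succ_of_ne_zero (by omega : m ≠ 0)
          simpa using hkk i p
        have hθme : θ m ≤ θ (m - 1) := hdec (m - 1) m (Nat.sub_le _ _)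
        have hθmπ : θ m ≤ π i := le_trans (hdec 0 m (Nat.zero_le _)) (hθπ i)
        have hθmP : 0 < θ m := (hθ m).1
        have hθmL : θ m ≤ 1 := (hθ m).2
        have hmid : 0 ≤ γ i (m + 1) m := by
          rw [h2, hdiag]
          have h1' : θ m / π i ≤ θ (m - 1) / π i := by gcongr
          have hu1 : θ m / π i ≤ 1 := div_le_one_of_le₀ hθmπ hpi0.le
          have key : θ m * (1 - (π i)⁻¹) = θ m - θ m / π i := by ring
          rw [key]
          nlinarith [mul_nonneg (sub_nonneg.2 hθmL) (sub_nonneg.2 h1'),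
            mul_nonneg hθmP.le (sub_nonneg.2 hu1)]
        constructor
        · intro t ht
          rcases lt_trichotomy t m with h | h | h
          · rw [h1 t h]
            exact mul_nonneg (by linarith) (ihn t h.le)
          · subst h; exact hmid
          · have : t = m + 1 := by omega
            subst this
            rw [h3]
            positivity
        · rw [Finset.sum_range_succ, Finset.sum_range_succ, h2, h3]
          have hsum : ∑ t ∈ Finset.range m, γ i (m + 1) t
              = (1 - θ m) * ∑ t ∈ Finset.range m, γ i m t := by
            rw [Finset.mul_sum]
            exact Finset.sum_congr rfl fun t ht => h1 t (Finset.mem_range.mp ht)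
          rw [hsum]
          have hsplit : ∑ t ∈ Finset.range m, γ i m t = 1 - γ i m m := by
            have := ihs
            rw [Finset.sum_range_succ] at this
            linarith
          rw [hsplit]
          field_simp
          ring
end

section
/- Let I be a proper sampling of {1,…,d} with marginals π_i ∈ (0,1), E the associated random activation matrix and P = blkdiag(π_1^{−1}I_{m_1},…,π_d^{−1}I_{m_d}). Fix x̂, x, x* ∈ ℝ^m, set x⁺ = x + E(x̂ − x), and let M = blkdiag(M_1,…,M_d) with each M_i symmetric positive definite. Then 𝔼[‖x⁺ − x*‖²_{PM}] = ‖x̂ − x*‖²_M + ‖x − x*‖²_{(P−I)M}. -/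
open Matrix Finset

/-- (eq. (normx) of the paper.)  With a proper sampling
(pmf `p`, marginals `π_i ∈ (0,1)`), activation matrices `E s`, weighting
matrix `P`, a block-diagonal symmetric positive definite matrix `M`, and
`x⁺ = x + E(x̂ − x)`, one has
`𝔼‖x⁺ − x*‖²_{PM} = ‖x̂ − x*‖²_M + ‖x − x*‖²_{(P−I)M}`. -/
theorem stmt_8 (m d : ℕ)
    (β : Fin m → Fin d)
    (p : Finset (Fin d) → ℝ) (hp0 : ∀ s, 0 ≤ p s)
    (hp1 : ∑ s : Finset (Fin d), p s = 1)
    (π : Fin d → ℝ) (hπ : ∀ i, 0 < π i ∧ π i < 1)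
    (hmarg : ∀ i, (∑ s : Finset (Fin d), if i ∈ s then p s else 0) = π i)
    (P : Matrix (Fin m) (Fin m) ℝ)
    (hP : P = Matrix.diagonal fun j => (π (β j))⁻¹)
    (E : Finset (Fin d) → Matrix (Fin m) (Fin m) ℝ)
    (hE : ∀ s, E s = Matrix.diagonal fun j => if β j ∈ s then (1 : ℝ) else 0)
    (M : Matrix (Fin m) (Fin m) ℝ)
    (hMblk : ∀ j j', β j ≠ β j' → M j j' = 0)
    (hMpd : M.PosDef)
    (xhat x xstar : Fin m → ℝ)
    (xplus : Finset (Fin d) → Fin m → ℝ)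
    (hxplus : ∀ s, xplus s = x + (E s).mulVec (xhat - x)) :
    (∑ s : Finset (Fin d), p s * ((P * M).mulVec (xplus s - xstar) ⬝ᵥ (xplus s - xstar)))
      = M.mulVec (xhat - xstar) ⬝ᵥ (xhat - xstar)
        + ((P - 1) * M).mulVec (x - xstar) ⬝ᵥ (x - xstar) := by
  have expand : ∀ (A : Matrix (Fin m) (Fin m) ℝ) (v : Fin m → ℝ),
      A.mulVec v ⬝ᵥ v = ∑ j : Fin m, ∑ j' : Fin m, A j j' * v j' * v j := by
    intro A v
    simp only [Matrix.mulVec, dotProduct, Finset.sum_mul]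
  have hv : ∀ s j, (xplus s - xstar) j
      = (x - xstar) j + (if β j ∈ s then (1:ℝ) else 0) * (xhat - x) j := by
    intro s j
    simp [hxplus, hE, Matrix.mulVec_diagonal, Pi.add_apply, Pi.sub_apply]
    ring
  have key : ∀ j j' : Fin m,
      (∑ s : Finset (Fin d), p s *
        ((P * M) j j' * ((xplus s - xstar) j' * (xplus s - xstar) j)))
      = M j j' * ((xhat - xstar) j' * (xhat - xstar) j)
        + ((P - 1) * M) j j' * ((x - xstar) j' * (x - xstar) j) := by
    intro j j'
    have hPM : (P * M) j j' = (π (β j))⁻¹ * M j j' := by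
      simp [hP, Matrix.diagonal_mul]
    have hPM1 : ((P - 1) * M) j j' = ((π (β j))⁻¹ - 1) * M j j' := by
      simp [hP, Matrix.sub_mul, Matrix.diagonal_mul, Matrix.one_mul, sub_mul]
    by_cases hb : β j = β j'
    · have hvv : ∀ s, (xplus s - xstar) j' * (xplus s - xstar) j
          = if β j ∈ s then (xhat - xstar) j' * (xhat - xstar) j
            else (x - xstar) j' * (x - xstar) j := by
        intro s
        rw [hv s j, hv s j', hb]
        by_cases hs : β j' ∈ s <;> simp [hs, Pi.sub_apply] <;> ring
      simp only [hvv, hPM, hPM1]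
      have : (∑ s : Finset (Fin d), p s * ((π (β j))⁻¹ * M j j' *
          (if β j ∈ s then (xhat - xstar) j' * (xhat - xstar) j
            else (x - xstar) j' * (x - xstar) j)))
          = (π (β j))⁻¹ * M j j' *
            ((∑ s : Finset (Fin d), if β j ∈ s then p s else 0) * ((xhat - xstar) j' * (xhat - xstar) j)
             + (∑ s : Finset (Fin d), if β j ∈ s then 0 else p s) * ((x - xstar) j' * (x - xstar) j)) := by
        rw [Finset.sum_mul, Finset.sum_mul, ← Finset.sum_add_distrib, Finset.mul_sum]
        refine Finset.sum_congr rfl fun s _ => ?_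
        by_cases hs : β j ∈ s <;> simp [hs] <;> ring
      rw [this]
      have hcomp : (∑ s : Finset (Fin d), if β j ∈ s then (0:ℝ) else p s) = 1 - π (β j) := by
        have : (∑ s : Finset (Fin d), if β j ∈ s then p s else 0)
            + (∑ s : Finset (Fin d), if β j ∈ s then (0:ℝ) else p s) = 1 := by
          rw [← Finset.sum_add_distrib, ← hp1]
          refine Finset.sum_congr rfl fun s _ => ?_
          by_cases hs : β j ∈ s <;> simp [hs]
        rw [hmarg] at this
        linarith
      rw [hmarg, hcomp]
      have hne : π (β j) ≠ 0 := (hπ (β j)).1.ne'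
      field_simp
    · rw [hMblk j j' hb] at hPM hPM1 ⊢
      simp [hPM, hPM1]
  rw [expand, expand, ← Finset.sum_add_distrib]
  have : (∑ s : Finset (Fin d), p s * ((P * M).mulVec (xplus s - xstar) ⬝ᵥ (xplus s - xstar)))
      = ∑ j : Fin m, ∑ j' : Fin m, ∑ s : Finset (Fin d),
          p s * ((P * M) j j' * ((xplus s - xstar) j' * (xplus s - xstar) j)) := by
    simp only [expand, Finset.mul_sum, mul_assoc]
    rw [Finset.sum_comm]
    refine Finset.sum_congr rfl fun j _ => Finset.sum_comm
  rw [this]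
  refine Finset.sum_congr rfl fun j _ => ?_
  rw [← Finset.sum_add_distrib]
  refine Finset.sum_congr rfl fun j' _ => ?_
  rw [key j j']
  ring
end

section
/- Let ψ_i : ℝ^{m_i} → (−∞,∞] for i = 1,…,d, let π_i ∈ (0,1), θ_k ∈ (0,1], and let γ_i^{k,t} be the coefficients defined by the recursion γ_i^{0,0} = 1, γ_i^{1,0} = 1 − θ_0/π_i, γ_i^{1,1} = θ_0/π_i, γ_i^{k+1,t} = (1−θ_k)γ_i^{k,t} for t ≤ k−1, γ_i^{k+1,k} = (1−θ_k)γ_i^{k,k} + θ_k(1−π_i^{−1}), γ_i^{k+1,k+1} = θ_k/π_i. Given points x^0,…,x^k ∈ ℝ^m and x̂^{k+1} ∈ ℝ^m, let x^{k+1} = x^k + E(x̂^{k+1} − x^k) with E the activation matrix of a proper sampling with marginals π_i, and define Ψ̂_k := Σ_{t=0}^k Σ_{i=1}^d γ_i^{k,t} ψ_i(x^t_i) and Ψ(x) := Σ_{i=1}^d ψ_i(x_i). Then 𝔼[Ψ̂_{k+1}] = (1−θ_k)Ψ̂_k + θ_k Ψ(x̂^{k+1}), where the expectation is over the sampling generating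 x^{k+1}. -/
open Finset

/-- (eq. (psi) of the paper.)  One-step expected update of the
weighted objective value `Ψ̂`.  `ℝ^m = ℝ^{m_1} × ⋯ × ℝ^{m_d}` is modelled as
`∀ i, Fin (n i) → ℝ`; a proper sampling is a pmf `p` on subsets of `{1,…,d}`
with marginals `π_i ∈ (0,1)`.  Given `x^0,…,x^k`, `x̂^{k+1}` and the random
update `x^{k+1} = x^k + E(x̂^{k+1} − x^k)` (blockwise:
`x^{k+1}_i = x̂^{k+1}_i` if `i ∈ s`, else `x^k_i`), and the recursive
coefficients `γ`, one has
`𝔼[Ψ̂_{k+1}] = (1−θ_k)Ψ̂_k + θ_k Ψ(x̂^{k+1})`. -/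
theorem stmt_9 (d : ℕ) (n : Fin d → ℕ)
    (p : Finset (Fin d) → ℝ) (hp0 : ∀ s, 0 ≤ p s)
    (hp1 : ∑ s : Finset (Fin d), p s = 1)
    (π : Fin d → ℝ) (hπ : ∀ i, 0 < π i ∧ π i < 1)
    (hmarg : ∀ i, (∑ s : Finset (Fin d), if i ∈ s then p s else 0) = π i)
    (θ : ℕ → ℝ) (hθ : ∀ k, 0 < θ k ∧ θ k ≤ 1)
    (γ : Fin d → ℕ → ℕ → ℝ)
    (hγ00 : ∀ i, γ i 0 0 = 1)
    (hγ10 : ∀ i, γ i 1 0 = 1 - θ 0 / π i)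
    (hγ11 : ∀ i, γ i 1 1 = θ 0 / π i)
    (hγrec : ∀ i k, 1 ≤ k →
        (∀ t, t < k → γ i (k + 1) t = (1 - θ k) * γ i k t)
        ∧ γ i (k + 1) k = (1 - θ k) * γ i k k + θ k * (1 - (π i)⁻¹)
        ∧ γ i (k + 1) (k + 1) = θ k / π i)
    (ψ : ∀ i, (Fin (n i) → ℝ) → ℝ)
    (k : ℕ) (x : ℕ → ∀ i, Fin (n i) → ℝ) (xhat : ∀ i, Fin (n i) → ℝ)
    (xnext : Finset (Fin d) → ∀ i, Fin (n i) → ℝ)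
    (hxnext : ∀ s i, xnext s i = if i ∈ s then xhat i else x k i) :
    (∑ s : Finset (Fin d), p s *
        ∑ t ∈ Finset.range (k + 2), ∑ i, γ i (k + 1) t *
          ψ i (if t = k + 1 then xnext s i else x t i))
      = (1 - θ k) * (∑ t ∈ Finset.range (k + 1), ∑ i, γ i k t * ψ i (x t i))
        + θ k * ∑ i, ψ i (xhat i) := by

  have hπ0 : ∀ i, π i ≠ 0 := fun i => ne_of_gt (hπ i).1
  have h1 : ∀ i t, t < k → γ i (k + 1) t = (1 - θ k) * γ i k t := by
    intro i t ht
    cases k with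
    | zero => omega
    | succ k' => exact (hγrec i (k' + 1) (Nat.le_add_left 1 k')).1 t ht
  have h2 : ∀ i, γ i (k + 1) k = (1 - θ k) * γ i k k + θ k * (1 - (π i)⁻¹) := by
    intro i
    cases k with
    | zero =>
      rw [hγ10, hγ00]
      field_simp
      ring
    | succ k' => exact (hγrec i (k' + 1) (Nat.le_add_left 1 k')).2.1
  have h3 : ∀ i, γ i (k + 1) (k + 1) = θ k / π i := by
    intro i
    cases k with
    | zero => exact hγ11 i
    | succ k' => exact (hγrec i (k' + 1) (Nat.le_add_left 1 k')).2.2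
  have hmarg' : ∀ i, (∑ s : Finset (Fin d), if i ∈ s then (0:ℝ) else p s) = 1 - π i := by
    intro i
    have h : ∀ s : Finset (Fin d), (if i ∈ s then (0:ℝ) else p s)
        = p s - (if i ∈ s then p s else 0) := by
      intro s; split <;> ring
    rw [Finset.sum_congr rfl fun s _ => h s, Finset.sum_sub_distrib, hp1, hmarg]
  have hsplit : ∀ s : Finset (Fin d),
      (∑ t ∈ Finset.range (k + 2), ∑ i, γ i (k + 1) t *
          ψ i (if t = k + 1 then xnext s i else x t i))
      = (∑ t ∈ Finset.range (k + 1), ∑ i, γ i (k + 1) t * ψ i (x t i))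
        + ∑ i, (θ k / π i) * ψ i (if i ∈ s then xhat i else x k i) := by
    intro s
    rw [Finset.sum_range_succ]
    congr 1
    · apply Finset.sum_congr rfl
      intro t ht
      have ht' : t ≠ k + 1 := by have := Finset.mem_range.mp ht; omega
      simp [ht']
    · simp [h3, hxnext]
  have hB : ∑ s : Finset (Fin d), p s *
        ∑ i, (θ k / π i) * ψ i (if i ∈ s then xhat i else x k i)
      = ∑ i, (θ k / π i) * (π i * ψ i (xhat i) + (1 - π i) * ψ i (x k i)) := by
    simp_rw [Finset.mul_sum]
    rw [Finset.sum_comm]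
    apply Finset.sum_congr rfl
    intro i _
    have h : ∀ s : Finset (Fin d),
        p s * ((θ k / π i) * ψ i (if i ∈ s then xhat i else x k i))
        = (if i ∈ s then p s else 0) * ((θ k / π i) * ψ i (xhat i))
          + (if i ∈ s then (0:ℝ) else p s) * ((θ k / π i) * ψ i (x k i)) := by
      intro s; split <;> ring
    rw [Finset.sum_congr rfl fun s _ => h s, Finset.sum_add_distrib,
      ← Finset.sum_mul, ← Finset.sum_mul, hmarg, hmarg']
    ring
  calc
    (∑ s : Finset (Fin d), p s *
        ∑ t ∈ Finset.range (k + 2), ∑ i, γ i (k + 1) t *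
          ψ i (if t = k + 1 then xnext s i else x t i))
      = ∑ s : Finset (Fin d), (p s *
          (∑ t ∈ Finset.range (k + 1), ∑ i, γ i (k + 1) t * ψ i (x t i))
          + p s * ∑ i, (θ k / π i) * ψ i (if i ∈ s then xhat i else x k i)) := by
        apply Finset.sum_congr rfl
        intro s _
        rw [hsplit s, mul_add]
    _ = (∑ t ∈ Finset.range (k + 1), ∑ i, γ i (k + 1) t * ψ i (x t i))
        + ∑ i, (θ k / π i) * (π i * ψ i (xhat i) + (1 - π i) * ψ i (x k i)) := by
        rw [Finset.sum_add_distrib, ← Finset.sum_mul, hp1, one_mul, hB]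
    _ = ((1 - θ k) * (∑ t ∈ Finset.range k, ∑ i, γ i k t * ψ i (x t i))
          + ∑ i, ((1 - θ k) * γ i k k + θ k * (1 - (π i)⁻¹)) * ψ i (x k i))
        + ∑ i, (θ k / π i) * (π i * ψ i (xhat i) + (1 - π i) * ψ i (x k i)) := by
        congr 1
        rw [Finset.sum_range_succ, Finset.mul_sum]
        congr 1
        · apply Finset.sum_congr rfl
          intro t ht
          rw [Finset.mul_sum]
          apply Finset.sum_congr rfl
          intro i _
          rw [h1 i t (Finset.mem_range.mp ht)]
          ring
        · exact Finset.sum_congr rfl fun i _ => by rw [h2 i]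
    _ = (1 - θ k) * (∑ t ∈ Finset.range (k + 1), ∑ i, γ i k t * ψ i (x t i))
        + θ k * ∑ i, ψ i (xhat i) := by
        rw [Finset.sum_range_succ, mul_add, Finset.mul_sum, Finset.mul_sum]
        rw [add_assoc, ← Finset.sum_add_distrib]
        conv_rhs => rw [add_assoc]
        congr 1
        rw [Finset.mul_sum, ← Finset.sum_add_distrib]
        apply Finset.sum_congr rfl
        intro i _
        have := hπ0 i
        field_simp
        ring
end

section
/- Let h(x) = (1/2)‖Ax − b‖², let I be a proper sampling with marginals π_i ∈ (0,1), activation matrix E and P = blkdiag(π_1^{−1}I_{m_1},…,π_d^{−1}I_{m_d}). Fix x̂, x ∈ ℝ^m and set x⁺ = x + E(x̂ − x). Then 𝔼[h(x + P(x⁺ − x))] = h(x̂) + (1/2)𝔼[‖A(x + P(x⁺ − x) − x̂)‖²]. -/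
open Matrix Finset

/-- (eq. (hforward) of the paper.)  With
`h(x) = (1/2)‖Ax − b‖²`, a proper sampling (pmf `p`, marginals `π_i ∈ (0,1)`),
activation matrices `E s`, weighting matrix `P`, and `x⁺ = x + E(x̂ − x)`,
one has `𝔼[h(x + P(x⁺ − x))] = h(x̂) + (1/2)𝔼‖A(x + P(x⁺ − x) − x̂)‖²`. -/
theorem stmt_10 (q m d : ℕ) (A : Matrix (Fin q) (Fin m) ℝ) (b : Fin q → ℝ)
    (h : (Fin m → ℝ) → ℝ)
    (hdef : ∀ x, h x = (1 / 2) * ((A.mulVec x - b) ⬝ᵥ (A.mulVec x - b)))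
    (β : Fin m → Fin d)
    (p : Finset (Fin d) → ℝ) (hp0 : ∀ s, 0 ≤ p s)
    (hp1 : ∑ s : Finset (Fin d), p s = 1)
    (π : Fin d → ℝ) (hπ : ∀ i, 0 < π i ∧ π i < 1)
    (hmarg : ∀ i, (∑ s : Finset (Fin d), if i ∈ s then p s else 0) = π i)
    (P : Matrix (Fin m) (Fin m) ℝ)
    (hP : P = Matrix.diagonal fun j => (π (β j))⁻¹)
    (E : Finset (Fin d) → Matrix (Fin m) (Fin m) ℝ)
    (hE : ∀ s, E s = Matrix.diagonal fun j => if β j ∈ s then (1 : ℝ) else 0)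
    (xhat x : Fin m → ℝ)
    (xplus : Finset (Fin d) → Fin m → ℝ)
    (hxplus : ∀ s, xplus s = x + (E s).mulVec (xhat - x)) :
    (∑ s : Finset (Fin d), p s * h (x + P.mulVec (xplus s - x)))
      = h xhat + (1 / 2) * ∑ s : Finset (Fin d), p s *
          (A.mulVec (x + P.mulVec (xplus s - x) - xhat)
            ⬝ᵥ A.mulVec (x + P.mulVec (xplus s - x) - xhat)) := by
  have hπne : ∀ i, π i ≠ 0 := fun i => (hπ i).1.ne'
  set c : Fin q → ℝ := A.mulVec xhat - b with hc
  set f : Finset (Fin d) → Fin m → ℝ :=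
    fun s => x + P.mulVec (xplus s - x) - xhat with hf
  -- key: expectation of f is zero, componentwise
  have key : ∀ j, (∑ s : Finset (Fin d), p s * f s j) = 0 := by
    intro j
    have hfs : ∀ s : Finset (Fin d), f s j
        = (x j - xhat j) + (π (β j))⁻¹ * (xhat j - x j) * (if β j ∈ s then 1 else 0) := by
      intro s
      simp [hf, hxplus, hP, hE, Matrix.mulVec_diagonal, Pi.add_apply, Pi.sub_apply]
      split <;> ring
    calc ∑ s : Finset (Fin d), p s * f s j
        = ∑ s : Finset (Fin d), ((x j - xhat j) * p s
            + (π (β j))⁻¹ * (xhat j - x j) * (if β j ∈ s then p s else 0)) := by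
          refine Finset.sum_congr rfl fun s _ => ?_
          rw [hfs s]; split <;> ring
      _ = (x j - xhat j) * (∑ s : Finset (Fin d), p s)
            + (π (β j))⁻¹ * (xhat j - x j) * (∑ s : Finset (Fin d), if β j ∈ s then p s else 0) := by
          rw [Finset.sum_add_distrib, ← Finset.mul_sum, ← Finset.mul_sum]
      _ = 0 := by
          rw [hp1, hmarg, mul_assoc, mul_comm (π (β j))⁻¹, mul_assoc, mul_inv_cancel₀ (hπne (β j))]
          ring
  -- cross term vanishes
  have cross : (∑ s : Finset (Fin d), p s * (c ⬝ᵥ A.mulVec (f s))) = 0 := by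
    have : ∀ s : Finset (Fin d), p s * (c ⬝ᵥ A.mulVec (f s))
        = ∑ j, (Matrix.vecMul c A) j * (p s * f s j) := by
      intro s
      rw [Matrix.dotProduct_mulVec, dotProduct, Finset.mul_sum]
      exact Finset.sum_congr rfl fun j _ => by ring
    rw [Finset.sum_congr rfl fun s _ => this s, Finset.sum_comm]
    refine Finset.sum_eq_zero fun j _ => ?_
    rw [← Finset.mul_sum, key j, mul_zero]
  -- expand each term
  have expand : ∀ s : Finset (Fin d), p s * h (x + P.mulVec (xplus s - x))
      = p s * h xhat + p s * (c ⬝ᵥ A.mulVec (f s))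
        + (1 / 2) * (p s * (A.mulVec (f s) ⬝ᵥ A.mulVec (f s))) := by
    intro s
    have hA : A.mulVec (x + P.mulVec (xplus s - x)) - b = A.mulVec (f s) + c := by
      simp only [hf, hc, Matrix.mulVec_add, Matrix.mulVec_sub]
      abel
    rw [hdef, hdef, hA]
    rw [add_dotProduct, dotProduct_add, dotProduct_add, dotProduct_comm c (A.mulVec (f s))]
    ring
  rw [Finset.sum_congr rfl fun s _ => expand s, Finset.sum_add_distrib,
    Finset.sum_add_distrib, cross, ← Finset.sum_mul, hp1, ← Finset.mul_sum]
  simp [hf]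
end

section
/- Consider problem data Φ(x) = Σ_i φ_i(x_i) with each φ_i convex, differentiable, satisfying 0 ≤ φ_i(x_i+t_i) − φ_i(x_i) − ⟨∇φ_i(x_i), t_i⟩ ≤ (1/2)‖t_i‖²_{Λ_i} (Λ = blkdiag(Λ_i) ≻ 0), R(x) = Σ_i r_i(x_i) with each r_i proper lsc μ_i-strongly convex (Υ = blkdiag(μ_i I_{m_i}) ⪰ 0), Ψ = Φ + R, and h(x) = (1/2)‖Ax − b‖². Let a proper sampling have marginals π_i, matrices P and Ξ = 𝔼[EPAᵀAPE], and let one step of the block coordinate algorithm be: S_k = S_{k−1} + σ_k (S_0 = 1), θ_k = σ_k/S_k, z^k = (1−θ_k)w^k + θ_k x^k, Q^k = (1/τ_k)PB with B = blkdiag(B_i) ≻ 0, x̂^{k+1} = argmin_u {R(u) + ⟨∇Φ(x^k) + S_k∇h(z^k), u − x^k⟩ + (1/2)‖u − x^k‖²_{Q^k}}, x^{k+1} = x^k + E_k(x̂^{k+1} − x^k), w^{k+1} = z^k + θ_k P(x^{k+1} − x^k). Then for every x* minimizing h: Ψ(x̂^{k+1}) − Ψ(x*) ≤ (S_{k−1}²/σ_k)(h(w^k)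 − h(x*)) − (S_k²/σ_k)𝔼_k[h(w^{k+1}) − h(x*)] − σ_k(h(x^k) − h(x*)) + (1/2)‖x^k − x*‖²_{Q^k} − (1/2)‖x̂^{k+1} − x*‖²_{Q^k+Υ} − (1/2)‖x̂^{k+1} − x^k‖²_{Q^k − Λ − σ_kΞ}, where 𝔼_k denotes expectation conditional on the history up to step k. -/
noncomputable section
open Matrix Finset

namespace Stmt11

variable {d q : ℕ} {n : Fin d → ℕ}

/-- `A` applied to a block vector: `Ax = Σ_i A_i x_i`. -/
def amul (A : ∀ i, Matrix (Fin q) (Fin (n i)) ℝ) (x : ∀ i, Fin (n i) → ℝ) :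
    Fin q → ℝ := ∑ i, (A i).mulVec (x i)

/-- squared Euclidean norm on `ℝ^q`. -/
def sq {q : ℕ} (v : Fin q → ℝ) : ℝ := v ⬝ᵥ v

/-- Euclidean inner product on the product space. -/
def ip (u v : ∀ i, Fin (n i) → ℝ) : ℝ := ∑ i, u i ⬝ᵥ v i

/-- weighted squared (semi)norm `‖v‖²_N` for a block diagonal matrix
`N = blkdiag(N_1, …, N_d)`. -/
def qn (N : ∀ i, Matrix (Fin (n i)) (Fin (n i)) ℝ) (v : ∀ i, Fin (n i) → ℝ) :
    ℝ := ∑ i, (N i).mulVec (v i) ⬝ᵥ v i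

lemma dp_sum {m : ℕ} {ι : Type*} (v : Fin m → ℝ) (s : Finset ι) (f : ι → Fin m → ℝ) :
    v ⬝ᵥ (∑ i ∈ s, f i) = ∑ i ∈ s, v ⬝ᵥ f i := by
  simp [dotProduct, Finset.mul_sum]
  exact Finset.sum_comm

lemma sq_nonneg' {m : ℕ} (v : Fin m → ℝ) : 0 ≤ sq v := by
  unfold sq dotProduct; exact Finset.sum_nonneg fun j _ => mul_self_nonneg _

lemma dp_nonneg {m : ℕ} (v : Fin m → ℝ) : 0 ≤ v ⬝ᵥ v := by
  unfold dotProduct; exact Finset.sum_nonneg fun j _ => mul_self_nonneg _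

lemma sq_add {m : ℕ} (u v : Fin m → ℝ) : sq (u + v) = sq u + 2 * (u ⬝ᵥ v) + sq v := by
  simp [sq, dotProduct_add, add_dotProduct, dotProduct_comm v u]; ring

lemma sq_sub {m : ℕ} (u v : Fin m → ℝ) : sq (u - v) = sq u - 2 * (u ⬝ᵥ v) + sq v := by
  simp [sq, dotProduct_sub, sub_dotProduct, dotProduct_comm v u]; ring

lemma sq_smul {m : ℕ} (c : ℝ) (u : Fin m → ℝ) : sq (c • u) = c ^ 2 * sq u := by
  simp [sq, smul_dotProduct, dotProduct_smul]; ring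

lemma amul_add (A : ∀ i, Matrix (Fin q) (Fin (n i)) ℝ) (u v : ∀ i, Fin (n i) → ℝ) :
    amul A (fun i => u i + v i) = amul A u + amul A v := by
  simp [amul, Matrix.mulVec_add, Finset.sum_add_distrib]

lemma amul_sub (A : ∀ i, Matrix (Fin q) (Fin (n i)) ℝ) (u v : ∀ i, Fin (n i) → ℝ) :
    amul A (fun i => u i - v i) = amul A u - amul A v := by
  simp [amul, Matrix.mulVec_sub, Finset.sum_sub_distrib]

lemma amul_smul (A : ∀ i, Matrix (Fin q) (Fin (n i)) ℝ) (c : ℝ) (u : ∀ i, Fin (n i) → ℝ) :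
    amul A (fun i => c • u i) = c • amul A u := by
  simp [amul, Matrix.mulVec_smul, Finset.smul_sum]

lemma amul_combo (A : ∀ i, Matrix (Fin q) (Fin (n i)) ℝ) (c c' : ℝ) (u v : ∀ i, Fin (n i) → ℝ) :
    amul A (fun i => c • u i + c' • v i) = c • amul A u + c' • amul A v := by
  simp [amul, Matrix.mulVec_add, Matrix.mulVec_smul, Finset.sum_add_distrib, Finset.smul_sum]

lemma qf_combo {m : ℕ} (M : Matrix (Fin m) (Fin m) ℝ) (a b : Fin m → ℝ) (t : ℝ) :
    M.mulVec (t • a + (1 - t) • b) ⬝ᵥ (t • a + (1 - t) • b)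
      = t * (M.mulVec a ⬝ᵥ a) + (1 - t) * (M.mulVec b ⬝ᵥ b)
        - t * (1 - t) * (M.mulVec (a - b) ⬝ᵥ (a - b)) := by
  simp [Matrix.mulVec_add, Matrix.mulVec_smul, Matrix.mulVec_sub, dotProduct_add,
    add_dotProduct, dotProduct_smul, smul_dotProduct, dotProduct_sub, sub_dotProduct,
    smul_eq_mul]
  ring

lemma qn_combo (N : ∀ i, Matrix (Fin (n i)) (Fin (n i)) ℝ) (a b : ∀ i, Fin (n i) → ℝ) (t : ℝ) :
    qn N (fun i => t • a i + (1 - t) • b i)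
      = t * qn N a + (1 - t) * qn N b - t * (1 - t) * qn N (fun i => a i - b i) := by
  unfold qn
  rw [Finset.sum_congr rfl (fun i _ => qf_combo (N i) (a i) (b i) t)]
  simp [Finset.sum_add_distrib, Finset.sum_sub_distrib, ← Finset.mul_sum]

lemma qn_neg (N : ∀ i, Matrix (Fin (n i)) (Fin (n i)) ℝ) (v : ∀ i, Fin (n i) → ℝ) :
    qn N (fun i => -(v i)) = qn N v := by
  simp [qn, Matrix.mulVec_neg, dotProduct_neg, neg_dotProduct]

lemma ip_combo (g : ∀ i, Fin (n i) → ℝ) (a b : ∀ i, Fin (n i) → ℝ) (t t' : ℝ) :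
    ip g (fun i => t • a i + t' • b i) = t * ip g a + t' * ip g b := by
  simp [ip, dotProduct_add, dotProduct_smul, Finset.sum_add_distrib, ← Finset.mul_sum,
    smul_eq_mul]

lemma ip_grad (A : ∀ i, Matrix (Fin q) (Fin (n i)) ℝ) (g : ∀ i, Fin (n i) → ℝ)
    (e : Fin q → ℝ) (c : ℝ) (v : ∀ i, Fin (n i) → ℝ) :
    ip (fun i => g i + c • (A i)ᵀ.mulVec e) v = ip g v + c * (e ⬝ᵥ amul A v) := by
  simp only [ip, add_dotProduct, smul_dotProduct, smul_eq_mul, Finset.sum_add_distrib,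
    ← Finset.mul_sum, amul, dp_sum]
  congr 1
  congr 1
  refine Finset.sum_congr rfl fun i _ => ?_
  rw [Matrix.mulVec_transpose, ← Matrix.dotProduct_mulVec]

lemma limit_step (Fh Fs c0 : ℝ) (hc0 : 0 ≤ c0)
    (hbase : ∀ t : ℝ, 0 < t → t ≤ 1 →
      Fh ≤ t * Fs + (1 - t) * Fh - t * (1 - t) / 2 * c0) :
    Fh + (1 / 2) * c0 ≤ Fs := by
  by_contra hcon
  push_neg at hcon
  have h1 := hbase 1 one_pos le_rfl
  have hd0 : 0 ≤ Fs - Fh := by linarith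
  have hden : (0 : ℝ) < c0 / 2 + 1 := by linarith
  have ht0 : 0 < (c0 / 2 - (Fs - Fh)) / (c0 / 2 + 1) := div_pos (by linarith) hden
  have ht1 : (c0 / 2 - (Fs - Fh)) / (c0 / 2 + 1) ≤ 1 := by
    rw [div_le_one hden]; linarith
  set t := (c0 / 2 - (Fs - Fh)) / (c0 / 2 + 1) with hts
  have h2 := hbase t ht0 ht1
  have htv : t * (c0 / 2 + 1) = c0 / 2 - (Fs - Fh) := by
    rw [hts]; field_simp
  have h3 : 0 ≤ t * ((Fs - Fh) - (1 - t) / 2 * c0) := by nlinarith [h2]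
  have h4 : 0 ≤ (Fs - Fh) - (1 - t) / 2 * c0 :=
    le_of_mul_le_mul_left (by linarith [h3] : t * 0 ≤ t * ((Fs - Fh) - (1 - t) / 2 * c0)) ht0
  linarith [htv, h4, ht0]

/-- (Key per-iteration estimate, eq. (finalpsi).)
One step (indexed `k+1`) of the randomised block coordinate algorithm for
`Ψ = Φ + R`, `h(x) = (1/2)‖Ax − b‖²`:  with `S_k = S_{k−1} + σ_k` (`S_0 = 1`),
`θ_k = σ_k/S_k`, `z^k = (1−θ_k)w^k + θ_k x^k`, `Q^k = (1/τ_k)PB`,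
`x̂^{k+1}` the weighted forward–backward (prox) step, the random update
`x^{k+1} = x^k + E_k(x̂^{k+1} − x^k)` and
`w^{k+1} = z^k + θ_k P(x^{k+1} − x^k)`, one has for every `x*` minimising `h`:
`Ψ(x̂^{k+1}) − Ψ(x*) ≤ (S_{k−1}²/σ_k)(h(w^k) − h(x*))
  − (S_k²/σ_k)𝔼_k[h(w^{k+1}) − h(x*)] − σ_k(h(x^k) − h(x*))
  + (1/2)‖x^k − x*‖²_{Q^k} − (1/2)‖x̂^{k+1} − x*‖²_{Q^k+Υ}
  − (1/2)‖x̂^{k+1} − x^k‖²_{Q^k − Λ − σ_kΞ}`,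
where `𝔼_k` (conditional expectation given the history) is realised as the
expectation over the single sampling generating `x^{k+1}`, and the quadratic
form of `Ξ = 𝔼[E P AᵀA P E]` is `v ↦ 𝔼‖A P E v‖²`. -/
theorem stmt_11
    (A : ∀ i, Matrix (Fin q) (Fin (n i)) ℝ) (b : Fin q → ℝ)
    (h : (∀ i, Fin (n i) → ℝ) → ℝ)
    (hdef : ∀ x, h x = (1 / 2) * sq (amul A x - b))
    -- smooth part Φ = Σ φ_i with gradients gφ_i and block smoothness matrices Λ_i
    (φ : ∀ i, (Fin (n i) → ℝ) → ℝ)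
    (gφ : ∀ i, (Fin (n i) → ℝ) → Fin (n i) → ℝ)
    (Λ : ∀ i, Matrix (Fin (n i)) (Fin (n i)) ℝ) (hΛ : ∀ i, (Λ i).PosDef)
    (hφ : ∀ i (xi ti : Fin (n i) → ℝ),
        0 ≤ φ i (xi + ti) - φ i xi - gφ i xi ⬝ᵥ ti
        ∧ φ i (xi + ti) - φ i xi - gφ i xi ⬝ᵥ ti
            ≤ (1 / 2) * ((Λ i).mulVec ti ⬝ᵥ ti))
    -- nonsmooth part R = Σ r_i, each proper lsc and μ_i-strongly convex, μ_i ≥ 0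
    (r : ∀ i, (Fin (n i) → ℝ) → ℝ) (μ : Fin d → ℝ) (hμ : ∀ i, 0 ≤ μ i)
    (hrlsc : ∀ i, LowerSemicontinuous (r i))
    (hrsc : ∀ i (u v : Fin (n i) → ℝ) (t : ℝ), 0 ≤ t → t ≤ 1 →
        r i (t • u + (1 - t) • v)
          ≤ t * r i u + (1 - t) * r i v
            - μ i / 2 * (t * (1 - t)) * ((u - v) ⬝ᵥ (u - v)))
    (Ψ : (∀ i, Fin (n i) → ℝ) → ℝ)
    (hΨ : ∀ x, Ψ x = (∑ i, φ i (x i)) + ∑ i, r i (x i))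
    -- proper sampling: pmf p with marginals π_i ∈ (0,1)
    (p : Finset (Fin d) → ℝ) (hp0 : ∀ s, 0 ≤ p s)
    (hp1 : ∑ s : Finset (Fin d), p s = 1)
    (π : Fin d → ℝ) (hπ : ∀ i, 0 < π i ∧ π i < 1)
    (hmarg : ∀ i, (∑ s : Finset (Fin d), if i ∈ s then p s else 0) = π i)
    -- the quadratic form of Ξ = E[E P AᵀA P E]
    (Ξq : (∀ i, Fin (n i) → ℝ) → ℝ)
    (hΞq : ∀ v, Ξq v = ∑ s : Finset (Fin d),
        p s * sq (amul A fun i => (π i)⁻¹ • (if i ∈ s then v i else 0)))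
    -- positive step sizes and the cumulative step sizes S_k
    (σ τ : ℕ → ℝ) (hσ : ∀ k, 0 < σ k) (hτ : ∀ k, 0 < τ k)
    (S : ℕ → ℝ) (hS0 : S 0 = 1) (hSrec : ∀ k, S (k + 1) = S k + σ (k + 1))
    (B : ∀ i, Matrix (Fin (n i)) (Fin (n i)) ℝ) (hB : ∀ i, (B i).PosDef)
    (k : ℕ)
    (Q : ∀ i, Matrix (Fin (n i)) (Fin (n i)) ℝ)
    (hQ : ∀ i, Q i = (1 / (π i * τ (k + 1))) • B i)
    -- one step of the algorithm (step index k+1)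
    (x w z xhat : ∀ i, Fin (n i) → ℝ)
    (hz : ∀ i, z i = (1 - σ (k + 1) / S (k + 1)) • w i + (σ (k + 1) / S (k + 1)) • x i)
    (hxhat : ∀ u : ∀ i, Fin (n i) → ℝ,
        (∑ i, r i (xhat i))
          + ip (fun i => gφ i (x i) + S (k + 1) • (A i)ᵀ.mulVec (amul A z - b))
              (fun i => xhat i - x i)
          + (1 / 2) * qn Q (fun i => xhat i - x i)
        ≤ (∑ i, r i (u i))
          + ip (fun i => gφ i (x i) + S (k + 1) • (A i)ᵀ.mulVec (amul A z - b))
              (fun i => u i - x i)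
          + (1 / 2) * qn Q (fun i => u i - x i))
    (xnext : Finset (Fin d) → ∀ i, Fin (n i) → ℝ)
    (hxnext : ∀ s i, xnext s i = if i ∈ s then xhat i else x i)
    (wnext : Finset (Fin d) → ∀ i, Fin (n i) → ℝ)
    (hwnext : ∀ s i, wnext s i
        = z i + (σ (k + 1) / S (k + 1) * (π i)⁻¹) • (xnext s i - x i))
    -- reference point x* ∈ 𝒳 = argmin h
    (xstar : ∀ i, Fin (n i) → ℝ) (hxstar : ∀ u, h xstar ≤ h u) :
    Ψ xhat - Ψ xstar
      ≤ (S k) ^ 2 / σ (k + 1) * (h w - h xstar)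
        - (S (k + 1)) ^ 2 / σ (k + 1)
            * (∑ s : Finset (Fin d), p s * (h (wnext s) - h xstar))
        - σ (k + 1) * (h x - h xstar)
        + (1 / 2) * qn Q (fun i => x i - xstar i)
        - (1 / 2) * (qn Q (fun i => xhat i - xstar i)
            + ∑ i, μ i * ((xhat i - xstar i) ⬝ᵥ (xhat i - xstar i)))
        - (1 / 2) * (qn Q (fun i => xhat i - x i)
            - qn Λ (fun i => xhat i - x i)
            - σ (k + 1) * Ξq (fun i => xhat i - x i)) := by
  have hσ1 : 0 < σ (k + 1) := hσ _
  have hσ1' : σ (k + 1) ≠ 0 := ne_of_gt hσ1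
  have hSpos : ∀ j, 0 < S j := by
    intro j
    induction j with
    | zero => rw [hS0]; norm_num
    | succ j ih => rw [hSrec]; have := hσ (j + 1); linarith
  have hS1pos : 0 < S (k + 1) := hSpos _
  have hS1' : S (k + 1) ≠ 0 := ne_of_gt hS1pos
  have hSk' : S k ≠ 0 := ne_of_gt (hSpos k)
  -- orthogonality at the minimiser
  have horth : ∀ v : (∀ i, Fin (n i) → ℝ), (amul A xstar - b) ⬝ᵥ amul A v = 0 := by
    intro v
    set a := (amul A xstar - b) ⬝ᵥ amul A v with ha
    set bq := sq (amul A v) with hbq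
    have hbq0 : 0 ≤ bq := sq_nonneg' _
    have key : ∀ ε : ℝ, 0 ≤ ε * a + ε ^ 2 / 2 * bq := by
      intro ε
      have h1 := hxstar (fun i => xstar i + ε • v i)
      rw [hdef, hdef] at h1
      have he : amul A (fun i => xstar i + ε • v i) = amul A xstar + ε • amul A v := by
        rw [amul_add A xstar (fun i => ε • v i), amul_smul]
      rw [he] at h1
      have he2 : amul A xstar + ε • amul A v - b = (amul A xstar - b) + ε • amul A v := by
        abel
      rw [he2, sq_add, sq_smul] at h1
      have he3 : (amul A xstar - b) ⬝ᵥ (ε • amul A v) = ε * a := by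
        rw [dotProduct_smul, smul_eq_mul, ha]
      rw [he3] at h1
      rw [← hbq] at h1
      nlinarith [h1]
    have hkey := key (-a / (bq + 1))
    have hb1 : (0 : ℝ) < bq + 1 := by linarith
    have h2 : 0 ≤ (bq + 1) ^ 2 * (-a / (bq + 1) * a + (-a / (bq + 1)) ^ 2 / 2 * bq) :=
      mul_nonneg (by positivity) hkey
    have h3 : (bq + 1) ^ 2 * (-a / (bq + 1) * a + (-a / (bq + 1)) ^ 2 / 2 * bq)
        = -(a ^ 2) * (bq + 1) + a ^ 2 * bq / 2 := by
      field_simp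
    rw [h3] at h2
    have ha2 : a ^ 2 = 0 := le_antisymm (by nlinarith) (sq_nonneg a)
    exact (pow_eq_zero_iff (two_ne_zero)).mp ha2
  -- quadratic expansion of h around the minimiser
  have hquad : ∀ u, h u - h xstar = (1 / 2) * sq (amul A u - amul A xstar) := by
    intro u
    rw [hdef, hdef]
    have he : amul A u - b = (amul A xstar - b) + (amul A u - amul A xstar) := by abel
    have h0 := horth (fun i => u i - xstar i)
    rw [amul_sub] at h0
    rw [he, sq_add, h0]
    ring
  -- relation between w, z, x images under A
  have hAz : amul A z
      = (1 - σ (k + 1) / S (k + 1)) • amul A w + (σ (k + 1) / S (k + 1)) • amul A x := by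
    have hzf : z = fun i => (1 - σ (k + 1) / S (k + 1)) • w i + (σ (k + 1) / S (k + 1)) • x i :=
      funext hz
    rw [hzf, amul_combo]
  have hWrel : S k • (amul A w - amul A xstar)
      = S (k + 1) • (amul A z - amul A xstar) - σ (k + 1) • (amul A x - amul A xstar) := by
    rw [hAz]
    have e1 : S (k + 1) * (1 - σ (k + 1) / S (k + 1)) = S k := by
      field_simp
      linarith [hSrec k]
    have e3 : S (k + 1) = S k + σ (k + 1) := hSrec k
    rw [smul_sub, smul_sub, smul_sub, smul_add, smul_smul, smul_smul, e1,
      mul_div_cancel₀ _ hS1', e3]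
    module
  have keyW : (S k) ^ 2 * sq (amul A w - amul A xstar)
      = (S (k + 1)) ^ 2 * sq (amul A z - amul A xstar)
        - 2 * S (k + 1) * σ (k + 1)
            * ((amul A z - amul A xstar) ⬝ᵥ (amul A x - amul A xstar))
        + (σ (k + 1)) ^ 2 * sq (amul A x - amul A xstar) := by
    have h1 : sq (S k • (amul A w - amul A xstar))
        = sq (S (k + 1) • (amul A z - amul A xstar)
            - σ (k + 1) • (amul A x - amul A xstar)) := by rw [hWrel]
    rw [sq_smul (S k), sq_sub (S (k + 1) • (amul A z - amul A xstar))
      (σ (k + 1) • (amul A x - amul A xstar)), sq_smul (S (k + 1)), sq_smul (σ (k + 1))] at h1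
    have h2 : (S (k + 1) • (amul A z - amul A xstar)) ⬝ᵥ (σ (k + 1) • (amul A x - amul A xstar))
        = S (k + 1) * σ (k + 1) * ((amul A z - amul A xstar) ⬝ᵥ (amul A x - amul A xstar)) := by
      rw [smul_dotProduct, dotProduct_smul, smul_eq_mul, smul_eq_mul]
      ring
    rw [h2] at h1
    linarith [h1]
  -- the sampling machinery
  set δ : ∀ i, Fin (n i) → ℝ := fun i => xhat i - x i with hδ
  have hxd : ∀ s i, xnext s i - x i = if i ∈ s then δ i else 0 := by
    intro s i
    rw [hxnext]
    by_cases hi : i ∈ s <;> simp [hi, hδ]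
  set V : Finset (Fin d) → Fin q → ℝ :=
    fun s => amul A (fun i => (π i)⁻¹ • (if i ∈ s then δ i else 0)) with hV
  have hwn : ∀ s, amul A (wnext s) = amul A z + (σ (k + 1) / S (k + 1)) • V s := by
    intro s
    have hw1 : wnext s = fun i =>
        z i + (σ (k + 1) / S (k + 1)) • ((π i)⁻¹ • (if i ∈ s then δ i else 0)) := by
      funext i
      rw [hwnext, hxd, mul_smul]
    rw [hw1, amul_add A z (fun i => (σ (k + 1) / S (k + 1)) • ((π i)⁻¹ • (if i ∈ s then δ i else 0))),
      amul_smul, hV]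
  have hVsum : ∑ s : Finset (Fin d), p s • V s = amul A δ := by
    have hVs : ∀ s, V s = ∑ i, (π i)⁻¹ • (if i ∈ s then (A i).mulVec (δ i) else 0) := by
      intro s
      rw [hV]
      refine Finset.sum_congr rfl fun i _ => ?_
      rw [Matrix.mulVec_smul, apply_ite ((A i).mulVec), Matrix.mulVec_zero]
    calc ∑ s : Finset (Fin d), p s • V s
        = ∑ s : Finset (Fin d), ∑ i,
            ((π i)⁻¹ * (if i ∈ s then p s else 0)) • (A i).mulVec (δ i) := by
          refine Finset.sum_congr rfl fun s _ => ?_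
          rw [hVs s, Finset.smul_sum]
          refine Finset.sum_congr rfl fun i _ => ?_
          by_cases hi : i ∈ s <;> simp [hi, smul_smul, mul_comm]
      _ = ∑ i, ((π i)⁻¹ * ∑ s : Finset (Fin d), (if i ∈ s then p s else 0))
            • (A i).mulVec (δ i) := by
          rw [Finset.sum_comm]
          refine Finset.sum_congr rfl fun i _ => ?_
          rw [Finset.mul_sum, Finset.sum_smul]
      _ = amul A δ := by
          refine Finset.sum_congr rfl fun i _ => ?_
          rw [hmarg i, inv_mul_cancel₀ (ne_of_gt (hπ i).1), one_smul]
  have hEsum : ∑ s : Finset (Fin d), p s * (h (wnext s) - h xstar)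
      = (1 / 2) * sq (amul A z - amul A xstar)
        + (σ (k + 1) / S (k + 1)) * ((amul A z - amul A xstar) ⬝ᵥ amul A δ)
        + (σ (k + 1) / S (k + 1)) ^ 2 / 2 * Ξq δ := by
    have per : ∀ s, h (wnext s) - h xstar
        = (1 / 2) * sq (amul A z - amul A xstar)
          + (σ (k + 1) / S (k + 1)) * ((amul A z - amul A xstar) ⬝ᵥ V s)
          + (σ (k + 1) / S (k + 1)) ^ 2 / 2 * sq (V s) := by
      intro s
      rw [hquad (wnext s)]
      have he : amul A (wnext s) - amul A xstar
          = (amul A z - amul A xstar) + (σ (k + 1) / S (k + 1)) • V s := by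
        rw [hwn s]; abel
      rw [he, sq_add, sq_smul, dotProduct_smul, smul_eq_mul]
      ring
    calc ∑ s : Finset (Fin d), p s * (h (wnext s) - h xstar)
        = ∑ s : Finset (Fin d),
            (p s * ((1 / 2) * sq (amul A z - amul A xstar))
              + (σ (k + 1) / S (k + 1)) * ((amul A z - amul A xstar) ⬝ᵥ (p s • V s))
              + (σ (k + 1) / S (k + 1)) ^ 2 / 2 * (p s * sq (V s))) := by
          refine Finset.sum_congr rfl fun s _ => ?_
          rw [per s, dotProduct_smul, smul_eq_mul]
          ring
      _ = (∑ s : Finset (Fin d), p s) * ((1 / 2) * sq (amul A z - amul A xstar))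
          + (σ (k + 1) / S (k + 1))
              * ((amul A z - amul A xstar) ⬝ᵥ (∑ s : Finset (Fin d), p s • V s))
          + (σ (k + 1) / S (k + 1)) ^ 2 / 2 * (∑ s : Finset (Fin d), p s * sq (V s)) := by
          rw [Finset.sum_add_distrib, Finset.sum_add_distrib, ← Finset.sum_mul,
            ← Finset.mul_sum, ← Finset.mul_sum, dp_sum]
      _ = (1 / 2) * sq (amul A z - amul A xstar)
          + (σ (k + 1) / S (k + 1)) * ((amul A z - amul A xstar) ⬝ᵥ amul A δ)
          + (σ (k + 1) / S (k + 1)) ^ 2 / 2 * Ξq δ := by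
          rw [hp1, hVsum, one_mul, hΞq δ, hV]
  -- the key equality for the h-part
  have hAsh : amul A (fun i => xstar i - xhat i)
      = -((amul A x - amul A xstar) + amul A δ) := by
    have h1 : amul A (fun i => xstar i - xhat i) = amul A xstar - amul A xhat :=
      amul_sub A xstar xhat
    have h2 : amul A δ = amul A xhat - amul A x := by
      rw [hδ]; exact amul_sub A xhat x
    rw [h1, h2]
    abel
  have hdot : (amul A z - b) ⬝ᵥ amul A (fun i => xstar i - xhat i)
      = -((amul A z - amul A xstar) ⬝ᵥ (amul A x - amul A xstar))
        - ((amul A z - amul A xstar) ⬝ᵥ amul A δ) := by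
    have hsplit : amul A z - b = (amul A xstar - b) + (amul A z - amul A xstar) := by abel
    rw [hsplit, add_dotProduct, horth (fun i => xstar i - xhat i), zero_add, hAsh,
      dotProduct_neg, dotProduct_add]
    ring
  have Hkey : (S k) ^ 2 / σ (k + 1) * (h w - h xstar)
      - (S (k + 1)) ^ 2 / σ (k + 1) * (∑ s : Finset (Fin d), p s * (h (wnext s) - h xstar))
      - σ (k + 1) * (h x - h xstar) + σ (k + 1) / 2 * Ξq δ
      = S (k + 1) * ((amul A z - b) ⬝ᵥ amul A (fun i => xstar i - xhat i)) := by
    have hsw : sq (amul A w - amul A xstar)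
        = ((S (k + 1)) ^ 2 * sq (amul A z - amul A xstar)
            - 2 * S (k + 1) * σ (k + 1)
                * ((amul A z - amul A xstar) ⬝ᵥ (amul A x - amul A xstar))
            + (σ (k + 1)) ^ 2 * sq (amul A x - amul A xstar)) / (S k) ^ 2 := by
      rw [eq_div_iff (pow_ne_zero 2 hSk')]
      linarith [keyW]
    rw [hquad w, hquad x, hEsum, hdot, hsw]
    field_simp
    ring
  -- smoothness/convexity of the φ_i
  have hφup : ∑ i, φ i (xhat i) - ∑ i, φ i (x i)
      ≤ ip (fun i => gφ i (x i)) δ + (1 / 2) * qn Λ δ := by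
    have h1 : ∀ i, φ i (xhat i) - φ i (x i) - gφ i (x i) ⬝ᵥ δ i
        ≤ (1 / 2) * ((Λ i).mulVec (δ i) ⬝ᵥ δ i) := by
      intro i
      have h2 := (hφ i (x i) (δ i)).2
      rw [show x i + δ i = xhat i by simp [hδ]] at h2
      exact h2
    have h2 := Finset.sum_le_sum (fun i (_ : i ∈ Finset.univ) => h1 i)
    simp only [Finset.sum_sub_distrib, ← Finset.mul_sum] at h2
    unfold ip qn
    linarith [h2]
  have hφlow : ∑ i, φ i (x i) + ip (fun i => gφ i (x i)) (fun i => xstar i - x i)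
      ≤ ∑ i, φ i (xstar i) := by
    have h1 : ∀ i, 0 ≤ φ i (xstar i) - φ i (x i) - gφ i (x i) ⬝ᵥ (xstar i - x i) := by
      intro i
      have h2 := (hφ i (x i) (xstar i - x i)).1
      rw [show x i + (xstar i - x i) = xstar i by abel] at h2
      exact h2
    have h2 := Finset.sum_le_sum (fun i (_ : i ∈ Finset.univ) => h1 i)
    simp only [Finset.sum_sub_distrib, Finset.sum_const_zero] at h2
    unfold ip
    linarith [h2]
  -- positivity of the quadratic form Q
  have hQpos : ∀ v : (∀ i, Fin (n i) → ℝ), 0 ≤ qn Q v := by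
    intro v
    refine Finset.sum_nonneg fun i _ => ?_
    rw [hQ i, Matrix.smul_mulVec, smul_dotProduct, smul_eq_mul]
    refine mul_nonneg ?_ ?_
    · have h3 : 0 < π i * τ (k + 1) := mul_pos (hπ i).1 (hτ (k + 1))
      positivity
    · have hps := (hB i).posSemidef.dotProduct_mulVec_nonneg (v i)
      simpa [dotProduct_comm] using hps
  -- the prox step
  set gv : ∀ i, Fin (n i) → ℝ :=
    fun i => gφ i (x i) + S (k + 1) • (A i)ᵀ.mulVec (amul A z - b) with hgv
  have hipg : ∀ v : (∀ i, Fin (n i) → ℝ), ip gv v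
      = ip (fun i => gφ i (x i)) v + S (k + 1) * ((amul A z - b) ⬝ᵥ amul A v) := by
    intro v
    rw [hgv]
    exact ip_grad A (fun i => gφ i (x i)) (amul A z - b) (S (k + 1)) v
  set c0 := qn Q (fun i => xstar i - xhat i)
      + ∑ i, μ i * ((xstar i - xhat i) ⬝ᵥ (xstar i - xhat i)) with hc0
  have hc0nn : 0 ≤ c0 := by
    rw [hc0]
    exact add_nonneg (hQpos _)
      (Finset.sum_nonneg fun i _ => mul_nonneg (hμ i) (dp_nonneg _))
  have hprox : (∑ i, r i (xhat i) + ip gv δ + 1 / 2 * qn Q δ) + (1 / 2) * c0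
      ≤ ∑ i, r i (xstar i) + ip gv (fun i => xstar i - x i)
        + 1 / 2 * qn Q (fun i => xstar i - x i) := by
    apply limit_step _ _ _ hc0nn
    intro t ht0 ht1
    have hxx := hxhat (fun i => t • xstar i + (1 - t) • xhat i)
    have hr := Finset.sum_le_sum (fun i (_ : i ∈ (Finset.univ : Finset (Fin d))) =>
      hrsc i (xstar i) (xhat i) t (le_of_lt ht0) ht1)
    have e : ∀ i, t * r i (xstar i) + (1 - t) * r i (xhat i)
        - μ i / 2 * (t * (1 - t)) * ((xstar i - xhat i) ⬝ᵥ (xstar i - xhat i))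
        = t * r i (xstar i) + (1 - t) * r i (xhat i)
          - t * (1 - t) / 2 * (μ i * ((xstar i - xhat i) ⬝ᵥ (xstar i - xhat i))) :=
      fun i => by ring
    rw [Finset.sum_congr rfl fun i _ => e i, Finset.sum_sub_distrib,
      Finset.sum_add_distrib, ← Finset.mul_sum, ← Finset.mul_sum, ← Finset.mul_sum] at hr
    have hfe : (fun i => t • xstar i + (1 - t) • xhat i - x i)
        = fun i => t • (xstar i - x i) + (1 - t) • δ i := by
      funext i
      simp only [hδ]
      module
    have hiplin : ip gv (fun i => t • xstar i + (1 - t) • xhat i - x i)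
        = t * ip gv (fun i => xstar i - x i) + (1 - t) * ip gv δ := by
      rw [hfe, ip_combo]
    have hqnc : qn Q (fun i => t • xstar i + (1 - t) • xhat i - x i)
        = t * qn Q (fun i => xstar i - x i) + (1 - t) * qn Q δ
          - t * (1 - t) * qn Q (fun i => xstar i - xhat i) := by
      rw [hfe, qn_combo]
      have hfe2 : (fun i => (xstar i - x i) - δ i) = fun i => xstar i - xhat i := by
        funext i
        simp only [hδ]
        abel
      rw [hfe2]
    rw [hiplin, hqnc] at hxx
    rw [hc0]
    linarith [hr, hxx]
  -- assembling the Φ/R estimate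
  have hmain : Ψ xhat - Ψ xstar
      ≤ S (k + 1) * ((amul A z - b) ⬝ᵥ amul A (fun i => xstar i - xhat i))
        + (1 / 2) * qn Q (fun i => xstar i - x i) - (1 / 2) * qn Q δ
        - (1 / 2) * c0 + (1 / 2) * qn Λ δ := by
    rw [hΨ, hΨ]
    have e4 := hipg δ
    have e5 := hipg (fun i => xstar i - x i)
    have e6 : amul A (fun i => xstar i - xhat i)
        = amul A (fun i => xstar i - x i) - amul A δ := by
      rw [amul_sub A xstar xhat, amul_sub A xstar x]
      have h2 : amul A δ = amul A xhat - amul A x := by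
        rw [hδ]; exact amul_sub A xhat x
      rw [h2]
      abel
    have e7 : S (k + 1) * ((amul A z - b) ⬝ᵥ amul A (fun i => xstar i - xhat i))
        = S (k + 1) * ((amul A z - b) ⬝ᵥ amul A (fun i => xstar i - x i))
          - S (k + 1) * ((amul A z - b) ⬝ᵥ amul A δ) := by
      rw [e6, dotProduct_sub]
      ring
    linarith [hφup, hφlow, hprox, e4, e5, e7]
  -- conclusion
  rw [← Hkey] at hmain
  have n1 : qn Q (fun i => xstar i - x i) = qn Q (fun i => x i - xstar i) := by
    rw [show (fun i => xstar i - x i) = (fun i => -(x i - xstar i)) by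
      funext i; rw [neg_sub], qn_neg]
  have n2 : qn Q (fun i => xstar i - xhat i) = qn Q (fun i => xhat i - xstar i) := by
    rw [show (fun i => xstar i - xhat i) = (fun i => -(xhat i - xstar i)) by
      funext i; rw [neg_sub], qn_neg]
  have n3 : ∑ i, μ i * ((xstar i - xhat i) ⬝ᵥ (xstar i - xhat i))
      = ∑ i, μ i * ((xhat i - xstar i) ⬝ᵥ (xhat i - xstar i)) := by
    refine Finset.sum_congr rfl fun i _ => ?_
    rw [show xstar i - xhat i = -(xhat i - xstar i) by rw [neg_sub], dotProduct_neg,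
      neg_dotProduct, neg_neg]
  rw [hc0] at hmain
  linarith [hmain, n1, n2, n3]

end Stmt11
end
end

section
/- Let Ψ = Φ + R with Φ : ℝ^m → ℝ convex differentiable and R proper lsc convex, and let h(x) = (1/2)‖Ax − b‖². Suppose (x*, y*) is a saddle point, i.e. 0 ∈ ∂Ψ(x*) − AᵀAy* and AᵀAx* = Aᵀb. Then for every w ∈ dom(R): Ψ(w) − Ψ(x*) ≥ −δ·√(h(w) − h(x*)) with δ = √2·‖Ay*‖. -/
open Matrix

/-- (eq. (LBw) of the paper.)  Let `Ψ = Φ + R` with `Φ`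
convex differentiable and `R : ℝ^m → (−∞,∞]` proper lsc convex, and
`h(x) = (1/2)‖Ax − b‖²`.  If `(x*, y*)` is a saddle point, i.e.
`AᵀAy* ∈ ∂Ψ(x*)` and `AᵀAx* = Aᵀb`, then for every `w ∈ dom R`,
`Ψ(w) − Ψ(x*) ≥ −δ√(h(w) − h(x*))` with `δ = √2‖Ay*‖`
(stated in the rearranged form `Ψ(x*) ≤ Ψ(w) + δ√(h(w) − h(x*))`). -/
theorem stmt_13 (q m : ℕ) (A : Matrix (Fin q) (Fin m) ℝ) (b : Fin q → ℝ)
    (h : (Fin m → ℝ) → ℝ)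
    (hdef : ∀ x, h x = (1 / 2) * ((A.mulVec x - b) ⬝ᵥ (A.mulVec x - b)))
    (Φ : (Fin m → ℝ) → ℝ)
    (hΦconv : ConvexOn ℝ Set.univ Φ) (hΦdiff : Differentiable ℝ Φ)
    (R : (Fin m → ℝ) → EReal)
    (hRproper : (∃ x, R x ≠ ⊤) ∧ ∀ x, R x ≠ ⊥)
    (hRconv : ∀ x y (t : ℝ), 0 ≤ t → t ≤ 1 →
        R (t • x + (1 - t) • y) ≤ (t : EReal) * R x + ((1 - t : ℝ) : EReal) * R y)
    (hRlsc : LowerSemicontinuous R)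
    (Ψ : (Fin m → ℝ) → EReal) (hΨ : ∀ x, Ψ x = ((Φ x : ℝ) : EReal) + R x)
    (xstar ystar : Fin m → ℝ)
    (hsub : ∀ u, Ψ xstar + ((Aᵀ.mulVec (A.mulVec ystar) ⬝ᵥ (u - xstar) : ℝ) : EReal) ≤ Ψ u)
    (hfeas : Aᵀ.mulVec (A.mulVec xstar) = Aᵀ.mulVec b) :
    ∀ w : Fin m → ℝ, R w ≠ ⊤ →
      Ψ xstar ≤ Ψ w
        + ((Real.sqrt 2 * Real.sqrt (A.mulVec ystar ⬝ᵥ A.mulVec ystar)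
            * Real.sqrt (h w - h xstar) : ℝ) : EReal) := by
  intro w hw
  set y := A.mulVec ystar with hy
  set u := A.mulVec (w - xstar) with hu
  set d : ℝ := Aᵀ.mulVec (A.mulVec ystar) ⬝ᵥ (w - xstar) with hd
  set c : ℝ := Real.sqrt 2 * Real.sqrt (y ⬝ᵥ y) * Real.sqrt (h w - h xstar) with hc
  -- residual orthogonality
  have horth : (A.mulVec xstar - b) ⬝ᵥ u = 0 := by
    have h1 : A.vecMul (A.mulVec xstar - b) = 0 := by
      rw [← Matrix.mulVec_transpose]
      rw [Matrix.mulVec_sub, hfeas, sub_self]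
    rw [hu, Matrix.dotProduct_mulVec, h1, zero_dotProduct]
  -- h w - h xstar = (1/2) u ⬝ u
  have hdiff : h w - h xstar = (1 / 2) * (u ⬝ᵥ u) := by
    have hsplit : A.mulVec w - b = u + (A.mulVec xstar - b) := by
      rw [hu, Matrix.mulVec_sub]; abel
    have horth' : u ⬝ᵥ (A.mulVec xstar - b) = 0 := by
      rw [dotProduct_comm]; exact horth
    rw [hdef, hdef, hsplit]
    rw [add_dotProduct, dotProduct_add, dotProduct_add, horth, horth']
    ring
  -- d = y ⬝ u
  have hdyu : d = y ⬝ᵥ u := by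
    rw [hd, hy, hu, Matrix.dotProduct_mulVec, ← Matrix.mulVec_transpose]
  have hyy : (0:ℝ) ≤ y ⬝ᵥ y := Finset.sum_nonneg fun i _ => mul_self_nonneg _
  have huu : (0:ℝ) ≤ u ⬝ᵥ u := Finset.sum_nonneg fun i _ => mul_self_nonneg _
  -- Cauchy-Schwarz: -(y ⬝ u) ≤ √(y⬝y) √(u⬝u)
  have hcs : -(y ⬝ᵥ u) ≤ Real.sqrt (y ⬝ᵥ y) * Real.sqrt (u ⬝ᵥ u) := by
    have h2 : (y ⬝ᵥ u) ^ 2 ≤ (y ⬝ᵥ y) * (u ⬝ᵥ u) := by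
      have := Finset.sum_mul_sq_le_sq_mul_sq Finset.univ y u
      simpa [dotProduct, sq, Finset.mul_sum, mul_comm] using this
    calc -(y ⬝ᵥ u) ≤ |y ⬝ᵥ u| := neg_le_abs _
      _ = Real.sqrt ((y ⬝ᵥ u) ^ 2) := (Real.sqrt_sq_eq_abs _).symm
      _ ≤ Real.sqrt ((y ⬝ᵥ y) * (u ⬝ᵥ u)) := Real.sqrt_le_sqrt h2
      _ = Real.sqrt (y ⬝ᵥ y) * Real.sqrt (u ⬝ᵥ u) := Real.sqrt_mul hyy _
  -- c = √(y⬝y) √(u⬝u)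
  have hceq : c = Real.sqrt (y ⬝ᵥ y) * Real.sqrt (u ⬝ᵥ u) := by
    rw [hc, hdiff]
    rw [mul_comm (Real.sqrt 2) (Real.sqrt (y ⬝ᵥ y)), mul_assoc,
      ← Real.sqrt_mul (by norm_num : (0:ℝ) ≤ 2)]
    norm_num
  have hdc : 0 ≤ d + c := by
    rw [hdyu, hceq]
    linarith [hcs]
  -- EReal conclusion
  have hstep : Ψ xstar + ((d + c : ℝ) : EReal) ≤ Ψ w + (c : EReal) := by
    rw [EReal.coe_add, ← add_assoc]
    exact add_le_add (hsub w) le_rfl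
  calc Ψ xstar = Ψ xstar + ((0:ℝ) : EReal) := by simp
    _ ≤ Ψ xstar + ((d + c : ℝ) : EReal) := add_le_add le_rfl (EReal.coe_le_coe_iff.2 hdc)
    _ ≤ Ψ w + (c : EReal) := hstep
end

section
/- (Lemma 8 of the paper.) Let π ∈ (0,1), κ ≥ 1/π, δ = κ − 1/π ≥ 0, α > 0, β = ακ, and consider the step-size sequences generated by the coupling σ_k τ_k = α − β τ_k and the recursion τ_{k+1} = τ_k·(−b_k τ_k + √(b_k²τ_k² + 4b_k/(δ+1)))/2 with b_k = (δ+1)/(1 − κτ_k² − δτ_k), starting from τ_0 ∈ (0, 1/κ). Then the sequence (τ_k) is positive, monotonically decreasing, converges to 0, and satisfies τ_k ≥ 2τ_0 / ((1 + κ − 1/π)·τ_0·k + 2) for all k ≥ 0. Consequently σ_k = α/τ_k − β = O(k) and S_k = 1 + Σ_{i=1}^k σ_i = O(k²); more precisely S_k ≤ 1 + (α(1+δ)/4)k(k+1) + kσ_0. -/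
open Filter

set_option maxHeartbeats 1000000

lemma step_aux (κ δ t c t' bk : ℝ) (hκ : 1 < κ) (hδ : 0 ≤ δ) (hδκ : δ + 1 < κ)
    (ht : 0 < t) (htκ : κ * t < 1) (hc : 0 < c) (hct : 2 * c + κ * t ≤ 1)
    (hbk : bk = (δ + 1) / (1 - κ * t ^ 2 - δ * t))
    (ht' : t' = t * (-bk * t + Real.sqrt (bk ^ 2 * t ^ 2 + 4 * bk / (δ + 1))) / 2) :
    0 < t' ∧ t' ≤ t ∧ 2 * t / (2 + (δ + 1) * t) ≤ t' ∧ t' * (1 + c * t) ≤ t := by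
  have hd : (0:ℝ) < δ + 1 := by linarith
  set D : ℝ := 1 - κ * t ^ 2 - δ * t with hDdef
  have hD : 0 < D := by nlinarith [mul_pos ht ht]
  have hbpos : 0 < bk := hbk ▸ div_pos hd hD
  have hbD : bk * D = δ + 1 := by rw [hbk]; field_simp
  set s : ℝ := Real.sqrt (bk ^ 2 * t ^ 2 + 4 * bk / (δ + 1)) with hsdef
  have harg : (0:ℝ) ≤ bk ^ 2 * t ^ 2 + 4 * bk / (δ + 1) := by positivity
  have hs2 : s ^ 2 = bk ^ 2 * t ^ 2 + 4 * bk / (δ + 1) := Real.sq_sqrt harg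
  have hs2' : (δ + 1) * s ^ 2 = (δ + 1) * bk ^ 2 * t ^ 2 + 4 * bk := by
    rw [hs2]; field_simp
  have hsgt : bk * t < s := by
    rw [hsdef]
    rw [show bk ^ 2 * t ^ 2 + 4 * bk / (δ + 1) = (bk*t)^2 + 4 * bk / (δ + 1) by ring]
    have h4 : 0 < 4 * bk / (δ + 1) := by positivity
    nlinarith [Real.sq_sqrt (show (0:ℝ) ≤ (bk*t)^2 + 4*bk/(δ+1) by positivity),
      Real.sqrt_nonneg ((bk*t)^2 + 4*bk/(δ+1)), mul_pos hbpos ht]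
  have ht'pos : 0 < t' := by
    rw [ht']
    have : 0 < -bk * t + s := by linarith
    positivity
  have E2 : (δ + 1) * (D * t' ^ 2 + (δ + 1) * t ^ 2 * t') = (δ + 1) * t ^ 2 := by
    rw [ht']
    linear_combination (D * t ^ 2 / 4) * hs2'
      + (-(δ+1) * t ^ 3 * s / 2 + (δ+1) * bk * t ^ 4 / 2 + t ^ 2) * hbD
  have E' : D * t' ^ 2 + (δ + 1) * t ^ 2 * t' = t ^ 2 := mul_left_cancel₀ hd.ne' E2
  have key1 : (t - t') * (D * (t + t') + (δ + 1) * t ^ 2) = t ^ 3 * (1 - κ * t) := by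
    linear_combination -E' + t ^ 2 * hDdef
  have hM1 : 0 < D * (t + t') + (δ + 1) * t ^ 2 := by positivity
  have hmono : t' ≤ t := by nlinarith [key1, hM1, mul_pos (mul_pos ht ht) ht]
  refine ⟨ht'pos, hmono, ?_, ?_⟩
  · have hu : (0:ℝ) < 2 + (δ + 1) * t := by positivity
    rw [div_le_iff₀ hu]
    have key2 : (t' * (2 + (δ+1)*t) - 2 * t) * (D * (t' * (2 + (δ+1)*t) + 2 * t)
        + (δ + 1) * t ^ 2 * (2 + (δ+1)*t)) = t ^ 3 * ((4*κ - (δ+1)^2) * t + 4*δ) := by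
      linear_combination (2 + (δ+1)*t) ^ 2 * E' - 4 * t ^ 2 * hDdef
    have hA : (δ+1)^2 * t ≤ 4*κ*t + 4*δ := by
      nlinarith [mul_nonneg (mul_nonneg (show (0:ℝ) ≤ 4*κ - (δ+1) by linarith) hd.le) ht.le,
        mul_nonneg (show (0:ℝ) ≤ 1 - κ*t by linarith) hδ]
    have hRHS : 0 ≤ t ^ 3 * ((4*κ - (δ+1)^2) * t + 4*δ) := by
      have h3 : 0 < t ^ 3 := by positivity
      nlinarith [h3, hA]
    have hM2 : 0 < D * (t' * (2 + (δ+1)*t) + 2 * t) + (δ + 1) * t ^ 2 * (2 + (δ+1)*t) := by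
      positivity
    nlinarith [key2, hM2, hRHS]
  · have key3 : (t - t' * (1 + c*t)) * (D * (t + t' * (1 + c*t)) + (δ + 1) * t ^ 2 * (1 + c*t))
        = t ^ 3 * ((1 - 2*c) - t * (κ + c^2 - c*(δ+1))) := by
      linear_combination -(1 + c*t) ^ 2 * E' + t ^ 2 * hDdef
    have hB : t * (κ + c^2 - c*(δ+1)) ≤ 1 - 2*c := by
      nlinarith [mul_nonneg (mul_nonneg hc.le (show (0:ℝ) ≤ δ + 1 - c by nlinarith)) ht.le]
    have hRHS : 0 ≤ t ^ 3 * ((1 - 2*c) - t * (κ + c^2 - c*(δ+1))) := by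
      have h3 : 0 < t ^ 3 := by positivity
      nlinarith [h3, hB]
    have hM3 : 0 < D * (t + t' * (1 + c*t)) + (δ + 1) * t ^ 2 * (1 + c*t) := by positivity
    nlinarith [key3, hM3, hRHS]



/-- (Lemma 8 of the paper.)  Behaviour of the accelerated
step-size sequence.  With `π ∈ (0,1)`, `κ ≥ 1/π`, `δ = κ − 1/π`, `α > 0`,
`β = ακ`, coupling `σ_k τ_k = α − βτ_k`, the recursion
`τ_{k+1} = τ_k(−b_kτ_k + √(b_k²τ_k² + 4b_k/(δ+1)))/2` with
`b_k = (δ+1)/(1 − κτ_k² − δτ_k)`, and `τ_0 ∈ (0, 1/κ)`, the sequence `(τ_k)`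
is positive, monotonically decreasing, converges to `0`, satisfies
`τ_k ≥ 2τ_0/((1 + κ − 1/π)τ_0 k + 2)`; consequently `σ_k = α/τ_k − β = O(k)`
and `S_k = O(k²)`, more precisely
`S_k ≤ 1 + (α(1+δ)/4)k(k+1) + kσ_0`. -/
theorem stmt_17 (π κ α β δ : ℝ)
    (hπ : 0 < π ∧ π < 1) (hκ : 1 / π ≤ κ) (hα : 0 < α)
    (hδ : δ = κ - 1 / π) (hβ : β = α * κ)
    (τ σ b S : ℕ → ℝ)
    (hτ0 : 0 < τ 0 ∧ τ 0 < 1 / κ)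
    (hb : ∀ k, b k = (δ + 1) / (1 - κ * (τ k) ^ 2 - δ * τ k))
    (hτrec : ∀ k, τ (k + 1)
        = τ k * (-(b k) * τ k + Real.sqrt ((b k) ^ 2 * (τ k) ^ 2 + 4 * b k / (δ + 1))) / 2)
    (hcoup : ∀ k, σ k * τ k = α - β * τ k)
    (hS0 : S 0 = 1) (hSrec : ∀ k, S (k + 1) = S k + σ (k + 1)) :
    (∀ k, 0 < τ k)
    ∧ (∀ k, τ (k + 1) ≤ τ k)
    ∧ Tendsto τ atTop (nhds 0)
    ∧ (∀ k : ℕ, 2 * τ 0 / ((1 + κ - 1 / π) * τ 0 * k + 2) ≤ τ k)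
    ∧ (∃ C : ℝ, ∀ k : ℕ, σ k ≤ C * (k + 1))
    ∧ (∀ k : ℕ, S k ≤ 1 + α * (1 + δ) / 4 * k * (k + 1) + k * σ 0) := by
  have hπ0 := hπ.1
  have hp : 1 < 1 / π := one_lt_one_div hπ0 hπ.2
  have hκ1 : 1 < κ := lt_of_lt_of_le hp hκ
  have hκ0 : 0 < κ := by linarith
  have hδ0 : 0 ≤ δ := by rw [hδ]; linarith
  have hδκ : δ + 1 < κ := by rw [hδ]; linarith
  have hτ00 : 0 < τ 0 := hτ0.1
  have hτ0κ : κ * τ 0 < 1 := by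
    have := (lt_div_iff₀ hκ0).mp hτ0.2; linarith
  set c : ℝ := (1 - κ * τ 0) / 2 with hcdef
  have hc : 0 < c := by rw [hcdef]; linarith
  -- main invariant
  have key : ∀ k, 0 < τ k ∧ τ k ≤ τ 0 ∧ κ * τ k < 1 := by
    intro k
    induction k with
    | zero => exact ⟨hτ00, le_refl _, hτ0κ⟩
    | succ k ih =>
      obtain ⟨h1, h2, h3⟩ := ih
      have hct : 2 * c + κ * τ k ≤ 1 := by
        have : κ * τ k ≤ κ * τ 0 := by nlinarith
        rw [hcdef]; linarith
      obtain ⟨p1, p2, p3, p4⟩ := step_aux κ δ (τ k) c (τ (k+1)) (b k) hκ1 hδ0 hδκ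
        h1 h3 hc hct (hb k) (hτrec k)
      exact ⟨p1, le_trans p2 h2, lt_of_le_of_lt (by nlinarith : κ * τ (k+1) ≤ κ * τ k) h3⟩
  have hpos : ∀ k, 0 < τ k := fun k => (key k).1
  -- per-step properties
  have step : ∀ k, τ (k+1) ≤ τ k ∧ 2 * τ k / (2 + (δ+1) * τ k) ≤ τ (k+1)
      ∧ τ (k+1) * (1 + c * τ k) ≤ τ k := by
    intro k
    obtain ⟨h1, h2, h3⟩ := key k
    have hct : 2 * c + κ * τ k ≤ 1 := by
      have : κ * τ k ≤ κ * τ 0 := by nlinarith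
      rw [hcdef]; linarith
    obtain ⟨p1, p2, p3, p4⟩ := step_aux κ δ (τ k) c (τ (k+1)) (b k) hκ1 hδ0 hδκ
      h1 h3 hc hct (hb k) (hτrec k)
    exact ⟨p2, p3, p4⟩
  have hmono : ∀ k, τ (k+1) ≤ τ k := fun k => (step k).1
  -- lower bound
  have hlow : ∀ k : ℕ, 2 * τ 0 / ((δ + 1) * τ 0 * k + 2) ≤ τ k := by
    intro k
    induction k with
    | zero => simp
    | succ k ih =>
      have hden : (0:ℝ) < (δ + 1) * τ 0 * k + 2 := by positivity
      have hden' : (0:ℝ) < (δ + 1) * τ 0 * (k+1 : ℕ) + 2 := by positivity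
      have ih' : 2 * τ 0 ≤ τ k * ((δ + 1) * τ 0 * k + 2) := (div_le_iff₀ hden).mp ih
      rw [div_le_iff₀ hden']
      have h2 := (step k).2.1
      have hu : (0:ℝ) < 2 + (δ + 1) * τ k := by nlinarith [mul_pos (show (0:ℝ) < δ + 1 by linarith) (hpos k)]
      have h2' : 2 * τ k ≤ τ (k+1) * (2 + (δ + 1) * τ k) := (div_le_iff₀ hu).mp h2
      push_cast
      nlinarith [ih', h2', hpos k, hpos (k+1), mul_pos (hpos (k+1)) (hpos k),
        mul_nonneg (mul_nonneg hδ0 hτ00.le) (by positivity : (0:ℝ) ≤ (k:ℝ)), hτ00, mul_pos hτ00 (hpos k)]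
  -- inverse growth for tendsto
  have hinv : ∀ k : ℕ, 1 / τ 0 + c * k ≤ 1 / τ k := by
    intro k
    induction k with
    | zero => simp
    | succ k ih =>
      have h3 := (step k).2.2
      have hstep : 1 / τ k + c ≤ 1 / τ (k+1) := by
        rw [div_add' _ _ _ (hpos k).ne', div_le_div_iff₀ (hpos k) (hpos (k+1))]
        nlinarith [h3, hpos (k+1), hpos k]
      push_cast
      have : c * ((k:ℝ) + 1) = c * k + c := by ring
      rw [this]
      linarith
  have htend : Tendsto τ atTop (nhds 0) := by
    have hup : ∀ k : ℕ, τ k ≤ (1 / τ 0 + c * k)⁻¹ := by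
      intro k
      have h1 : 0 < 1 / τ 0 + c * k := by positivity
      have h2 := hinv k
      rw [← one_div, le_div_iff₀ h1]
      have h3 : τ k * (1 / τ 0 + c * k) ≤ τ k * (1 / τ k) := by
        apply mul_le_mul_of_nonneg_left h2 (hpos k).le
      rw [mul_one_div, div_self (hpos k).ne'] at h3
      exact h3
    have hdiv : Tendsto (fun k : ℕ => 1 / τ 0 + c * k) atTop atTop := by
      apply tendsto_atTop_add_const_left
      exact (tendsto_natCast_atTop_atTop (R := ℝ)).const_mul_atTop hc
    have h0 : Tendsto (fun k : ℕ => (1 / τ 0 + c * k)⁻¹) atTop (nhds 0) :=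
      hdiv.inv_tendsto_atTop
    exact squeeze_zero (fun k => (hpos k).le) hup h0
  -- sigma bound
  have hτne : ∀ k, τ k ≠ 0 := fun k => (hpos k).ne'
  have hσ : ∀ k, σ k = α / τ k - β := by
    intro k
    have h := hcoup k
    field_simp [hτne k]
    linarith [h]
  have hσle : ∀ k : ℕ, σ k ≤ α * (δ + 1) / 2 * k + σ 0 := by
    intro k
    have hL : 0 < 2 * τ 0 / ((δ + 1) * τ 0 * k + 2) := by positivity
    have h1 : α / τ k ≤ α / (2 * τ 0 / ((δ + 1) * τ 0 * k + 2)) :=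
      div_le_div_of_nonneg_left hα.le hL (hlow k)
    have h2 : α / (2 * τ 0 / ((δ + 1) * τ 0 * k + 2)) = α * (δ + 1) / 2 * k + α / τ 0 := by
      rw [div_div_eq_mul_div]
      field_simp
    rw [hσ k, hσ 0]
    linarith [h1, h2.symm.le, h2.le]
  have hσbig : ∃ C : ℝ, ∀ k : ℕ, σ k ≤ C * (k + 1) := by
    refine ⟨α * (δ + 1) / 2 + max (σ 0) 0, fun k => ?_⟩
    have h1 := hσle k
    have h2 : (0:ℝ) ≤ α * (δ + 1) / 2 := by positivity
    have h3 : σ 0 ≤ max (σ 0) 0 := le_max_left _ _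
    have h4 : (0:ℝ) ≤ max (σ 0) 0 := le_max_right _ _
    have h5 : (0:ℝ) ≤ (k:ℝ) := Nat.cast_nonneg k
    nlinarith [mul_nonneg h4 h5]
  -- S bound
  have hSle : ∀ k : ℕ, S k ≤ 1 + α * (1 + δ) / 4 * k * (k + 1) + k * σ 0 := by
    intro k
    induction k with
    | zero => simp [hS0]
    | succ k ih =>
      have h1 := hσle (k + 1)
      rw [hSrec k]
      push_cast at h1 ⊢
      nlinarith [ih, h1, (by positivity : (0:ℝ) ≤ (k:ℝ))]
  -- lower bound restated
  have hlow' : ∀ k : ℕ, 2 * τ 0 / ((1 + κ - 1 / π) * τ 0 * k + 2) ≤ τ k := by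
    intro k
    have : (1 + κ - 1 / π) = δ + 1 := by rw [hδ]; ring
    rw [this]
    exact hlow k
  exact ⟨hpos, hmono, htend, hlow', hσbig, hSle⟩
end
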